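/- arXiv:1512.03107 — 5 statements merged into one kernel-verified Lean document; each statement's English description precedes it below -/
import Mathlib

section
/- Let ε > 0 with L_ε ≠ ∅, and let ρ > 0 be such that ‖g + v‖_q ≥ ρ for every w ∈ L_ε, every subgradient g of f at w, and every v ∈ N_Ω(w). Then for every w ∈ Ω one has ‖w − w†_ε‖_p ≤ (1/ρ)·(f(w) − f(w†_ε)). -/
open RealInnerProductSpace

noncomputable section

/-- The `p`-norm `‖w‖_p = (Σ_i |w_i|^p)^{1/p}` on `ℝ^d`. -/
def pnorm {d : ℕ} (p : ℝ) (w : EuclideanSpace ℝ (Fin d)) : ℝ :=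
  (∑ i, |w i| ^ p) ^ (1 / p)

/-- `g` is a subgradient of the convex function `f` at `w`. -/
def IsSubgradAt {d : ℕ} (f : EuclideanSpace ℝ (Fin d) → ℝ)
    (w g : EuclideanSpace ℝ (Fin d)) : Prop :=
  ∀ u, f w + ⟪g, u - w⟫ ≤ f u

/-- `v` belongs to the normal cone of `Ω` at `w`. -/
def InNormalCone {d : ℕ} (Ω : Set (EuclideanSpace ℝ (Fin d)))
    (w v : EuclideanSpace ℝ (Fin d)) : Prop :=
  ∀ u ∈ Ω, ⟪v, u - w⟫ ≤ 0

namespace Stmt12Aux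

variable {d : ℕ}

lemma pnorm_nonneg (p : ℝ) (x : EuclideanSpace ℝ (Fin d)) : 0 ≤ pnorm p x :=
  Real.rpow_nonneg (Finset.sum_nonneg fun i _ => Real.rpow_nonneg (abs_nonneg _) _) _

lemma pnorm_zero {p : ℝ} (hp : p ≠ 0) : pnorm p (0 : EuclideanSpace ℝ (Fin d)) = 0 := by
  have h0 : ∀ i : Fin d, |(0 : EuclideanSpace ℝ (Fin d)) i| ^ p = 0 := by
    intro i
    show |(0:ℝ)| ^ p = 0
    rw [abs_zero, Real.zero_rpow hp]
  simp only [pnorm, h0, Finset.sum_const_zero]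
  exact Real.zero_rpow (one_div_ne_zero hp)

lemma pnorm_neg (p : ℝ) (x : EuclideanSpace ℝ (Fin d)) : pnorm p (-x) = pnorm p x := by
  unfold pnorm
  congr 1
  apply Finset.sum_congr rfl
  intro i _
  have : (-x) i = -(x i) := rfl
  rw [this, abs_neg]

lemma pnorm_smul {p : ℝ} (hp : 0 < p) (t : ℝ) (x : EuclideanSpace ℝ (Fin d)) :
    pnorm p (t • x) = |t| * pnorm p x := by
  unfold pnorm
  have h1 : ∀ i : Fin d, |(t • x) i| ^ p = |t| ^ p * |x i| ^ p := by
    intro i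
    have : (t • x) i = t * x i := rfl
    rw [this, abs_mul, Real.mul_rpow (abs_nonneg _) (abs_nonneg _)]
  rw [Finset.sum_congr rfl fun i _ => h1 i, ← Finset.mul_sum,
    Real.mul_rpow (Real.rpow_nonneg (abs_nonneg _) _)
      (Finset.sum_nonneg fun i _ => Real.rpow_nonneg (abs_nonneg _) _),
    ← Real.rpow_mul (abs_nonneg t), mul_one_div_cancel hp.ne', Real.rpow_one]

lemma pnorm_pos {p : ℝ} (hp : 0 < p) {x : EuclideanSpace ℝ (Fin d)} (hx : x ≠ 0) :
    0 < pnorm p x := by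
  have hex : ∃ i, x i ≠ 0 := by
    by_contra hc
    push_neg at hc
    exact hx (by ext i; exact hc i)
  obtain ⟨i, hi⟩ := hex
  have hS : 0 < ∑ j, |x j| ^ p := by
    apply Finset.sum_pos' (fun j _ => Real.rpow_nonneg (abs_nonneg _) _)
    exact ⟨i, Finset.mem_univ i, Real.rpow_pos_of_pos (abs_pos.mpr hi) p⟩
  exact Real.rpow_pos_of_pos hS _

lemma pnorm_add_le {p : ℝ} (hp : 1 ≤ p) (x y : EuclideanSpace ℝ (Fin d)) :
    pnorm p (x + y) ≤ pnorm p x + pnorm p y := by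
  unfold pnorm
  have h : ∀ i : Fin d, |(x + y) i| ^ p = |x i + y i| ^ p := fun i => rfl
  rw [Finset.sum_congr rfl fun i _ => h i]
  exact Real.Lp_add_le Finset.univ (fun i => x i) (fun i => y i) hp

/-- convex combination of strict inequalities -/
lemma combo_lt {a b x1 x2 y1 y2 : ℝ} (ha : 0 ≤ a) (hb : 0 ≤ b) (hab : a + b = 1)
    (h1 : x1 < y1) (h2 : x2 < y2) : a * x1 + b * x2 < a * y1 + b * y2 := by
  rcases eq_or_lt_of_le ha with h | h
  · have hb1 : b = 1 := by linarith
    simp [← h, hb1, h2]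
  · have := mul_lt_mul_of_pos_left h1 h
    have := mul_le_mul_of_nonneg_left h2.le hb
    linarith

/-- If `⟪j,u⟫ ≤ ‖u‖_p` for all `u`, then `‖j‖_q ≤ 1` for the conjugate exponent `q`. -/
lemma dual_bound {p q : ℝ} (hp0 : 0 < p) (hq0 : 0 < q) (hpq : 1 / p + 1 / q = 1)
    (hqp : (q - 1) * p = q) {j : EuclideanSpace ℝ (Fin d)}
    (hj : ∀ u, ⟪j, u⟫ ≤ pnorm p u) : pnorm q j ≤ 1 := by
  by_cases hj0 : j = 0
  · rw [hj0, pnorm_zero hq0.ne']; exact zero_le_one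
  · set N := ∑ i, |j i| ^ q with hN
    have hNpos : 0 < N := by
      have hex : ∃ i, j i ≠ 0 := by
        by_contra hc; push_neg at hc; exact hj0 (by ext i; exact hc i)
      obtain ⟨i, hi⟩ := hex
      apply Finset.sum_pos' (fun k _ => Real.rpow_nonneg (abs_nonneg _) _)
      exact ⟨i, Finset.mem_univ i, Real.rpow_pos_of_pos (abs_pos.mpr hi) q⟩
    set u : EuclideanSpace ℝ (Fin d) := WithLp.toLp 2 (fun i => |j i| ^ (q - 2) * j i) with hu
    have hui : ∀ i, j i * u i = |j i| ^ q := by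
      intro i
      by_cases h : j i = 0
      · simp [hu, h, Real.zero_rpow hq0.ne']
      · have habs : 0 < |j i| := abs_pos.mpr h
        have : j i * (|j i| ^ (q - 2) * j i) = |j i| ^ (q - 2) * (j i * j i) := by ring
        rw [show u i = |j i| ^ (q-2) * j i from rfl, this]
        have hsq : j i * j i = |j i| ^ (2:ℝ) := by
          rw [show (2:ℝ) = ((2:ℕ):ℝ) by norm_num, Real.rpow_natCast]
          rw [pow_two, abs_mul_abs_self]
        rw [hsq, ← Real.rpow_add habs]
        norm_num
    have huabs : ∀ i, |u i| ^ p = |j i| ^ q := by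
      intro i
      by_cases h : j i = 0
      · simp [hu, h, Real.zero_rpow hp0.ne', Real.zero_rpow hq0.ne']
      · have habs : 0 < |j i| := abs_pos.mpr h
        have h1 : |u i| = |j i| ^ (q - 1) := by
          rw [show u i = |j i| ^ (q-2) * j i from rfl, abs_mul,
            abs_of_nonneg (Real.rpow_nonneg (abs_nonneg _) _)]
          calc |j i| ^ (q-2) * |j i| = |j i| ^ (q-2) * |j i| ^ (1:ℝ) := by
                rw [Real.rpow_one]
            _ = |j i| ^ (q-2+1) := (Real.rpow_add habs _ _).symm
            _ = |j i| ^ (q-1) := by ring_nf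
        rw [h1, ← Real.rpow_mul (abs_nonneg _), hqp]
    have hinner : ⟪j, u⟫ = N := by
      have : ⟪j, u⟫ = ∑ i, j i * u i := by
        simp [PiLp.inner_apply, RCLike.inner_apply, mul_comm]
      rw [this, hN]
      exact Finset.sum_congr rfl fun i _ => hui i
    have hup : pnorm p u = N ^ (1 / p) := by
      unfold pnorm
      rw [Finset.sum_congr rfl fun i _ => huabs i]
    have hkey : N ≤ N ^ (1 / p) := by
      have := hj u
      rwa [hinner, hup] at this
    have hqj : pnorm q j = N ^ (1 / q) := rfl
    rw [hqj]
    have hNp : 0 < N ^ (1 / p) := Real.rpow_pos_of_pos hNpos _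
    have hsplit : N ^ (1 / q) = N * (N ^ (1 / p))⁻¹ := by
      have h1q : 1 / q = 1 - 1 / p := by linarith
      rw [h1q, Real.rpow_sub hNpos, Real.rpow_one]
      exact div_eq_mul_inv _ _
    rw [hsplit]
    calc N * (N ^ (1/p))⁻¹ ≤ N ^ (1/p) * (N ^ (1/p))⁻¹ :=
          mul_le_mul_of_nonneg_right hkey (inv_nonneg.mpr hNp.le)
      _ = 1 := mul_inv_cancel₀ hNp.ne'

/-- Convexity of `z ↦ ‖z - w‖_p`. -/
lemma pnorm_sub_convexOn {p : ℝ} (hp : 1 ≤ p) (w : EuclideanSpace ℝ (Fin d)) :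
    ConvexOn ℝ Set.univ (fun z => pnorm p (z - w)) := by
  refine ⟨convex_univ, fun x _ y _ a b ha hb hab => ?_⟩
  have hp0 : 0 < p := lt_of_lt_of_le one_pos hp
  have hrepr : (a • x + b • y) - w = a • (x - w) + b • (y - w) := by
    have h2 : a • (x - w) + b • (y - w) = a • x + b • y - (a + b) • w := by module
    rw [h2, hab, one_smul]
  simp only [smul_eq_mul]
  calc pnorm p (a • x + b • y - w) = pnorm p (a • (x - w) + b • (y - w)) := by rw [hrepr]
    _ ≤ pnorm p (a • (x - w)) + pnorm p (b • (y - w)) := pnorm_add_le hp _ _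
    _ = a * pnorm p (x - w) + b * pnorm p (y - w) := by
        rw [pnorm_smul hp0, pnorm_smul hp0, abs_of_nonneg ha, abs_of_nonneg hb]

/-- The sandwich theorem: a linear functional between a convex function and a
concave function lying below it on a convex set containing `0`, both vanishing at `0`. -/
lemma sandwich (φ ψ : EuclideanSpace ℝ (Fin d) → ℝ)
    (C : Set (EuclideanSpace ℝ (Fin d))) (hC : Convex ℝ C)
    (h0C : (0 : EuclideanSpace ℝ (Fin d)) ∈ C)
    (hφ : ConvexOn ℝ Set.univ φ) (hφc : Continuous φ)
    (hψ : ConcaveOn ℝ C ψ)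
    (hle : ∀ u ∈ C, ψ u ≤ φ u) (hφ0 : φ 0 = 0) (hψ0 : ψ 0 = 0) :
    ∃ g : EuclideanSpace ℝ (Fin d), (∀ u, ⟪g, u⟫ ≤ φ u) ∧ ∀ u ∈ C, ψ u ≤ ⟪g, u⟫ := by
  classical
  set A : Set (EuclideanSpace ℝ (Fin d) × ℝ) := {z | φ z.1 < z.2} with hA
  set B : Set (EuclideanSpace ℝ (Fin d) × ℝ) := {z | z.1 ∈ C ∧ z.2 ≤ ψ z.1} with hB
  have hAo : IsOpen A := isOpen_lt (hφc.comp continuous_fst) continuous_snd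
  have hAc : Convex ℝ A := by
    rintro ⟨x1, t1⟩ hx ⟨x2, t2⟩ hy a b ha hb hab
    simp only [hA, Set.mem_setOf_eq] at hx hy ⊢
    have h1 : φ (a • x1 + b • x2) ≤ a * φ x1 + b * φ x2 := by
      simpa using hφ.2 (Set.mem_univ x1) (Set.mem_univ x2) ha hb hab
    have h2 : a * φ x1 + b * φ x2 < a * t1 + b * t2 := combo_lt ha hb hab hx hy
    simpa [Prod.smul_mk, smul_eq_mul] using lt_of_le_of_lt h1 h2
  have hBc : Convex ℝ B := by
    rintro ⟨x1, t1⟩ hx ⟨x2, t2⟩ hy a b ha hb hab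
    simp only [hB, Set.mem_setOf_eq] at hx hy ⊢
    refine ⟨hC hx.1 hy.1 ha hb hab, ?_⟩
    have h1 : a * ψ x1 + b * ψ x2 ≤ ψ (a • x1 + b • x2) := by
      simpa using hψ.2 hx.1 hy.1 ha hb hab
    have h2 : a * t1 + b * t2 ≤ a * ψ x1 + b * ψ x2 := by
      have := mul_le_mul_of_nonneg_left hx.2 ha
      have := mul_le_mul_of_nonneg_left hy.2 hb
      linarith
    simpa [Prod.smul_mk, smul_eq_mul] using le_trans h2 h1
  have hdisj : Disjoint A B := by
    rw [Set.disjoint_left]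
    rintro ⟨x, t⟩ hxA hxB
    simp only [hA, hB, Set.mem_setOf_eq] at hxA hxB
    exact absurd (lt_of_lt_of_le hxA (le_trans hxB.2 (hle x hxB.1))) (lt_irrefl _)
  obtain ⟨F, s, hFA, hFB⟩ := geometric_hahn_banach_open hAc hAo hBc hdisj
  set β : ℝ := F (0, 1) with hβ
  set L : EuclideanSpace ℝ (Fin d) → ℝ := fun u => F (u, 0) with hL
  have hFdec : ∀ (u : EuclideanSpace ℝ (Fin d)) (t : ℝ), F (u, t) = L u + t * β := by
    intro u t
    have h1 : ((u, t) : EuclideanSpace ℝ (Fin d) × ℝ) = (u, 0) + t • ((0 : EuclideanSpace ℝ (Fin d)), (1:ℝ)) := by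
      simp [Prod.ext_iff]
    rw [h1, map_add, map_smul]
    simp [hL, hβ, smul_eq_mul]
  have hF00 : F (0, 0) = 0 := by
    have : ((0,0) : EuclideanSpace ℝ (Fin d) × ℝ) = 0 := rfl
    rw [this, map_zero]
  have hs0 : s ≤ 0 := by
    have := hFB (0, 0) ⟨h0C, by rw [hψ0]⟩
    rwa [hF00] at this
  have hsA : ∀ t : ℝ, 0 < t → t * β < s := by
    intro t ht
    have : ((0 : EuclideanSpace ℝ (Fin d)), t) ∈ A := by
      simp only [hA, Set.mem_setOf_eq, hφ0]; exact ht
    have h2 := hFA _ this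
    rwa [hFdec, show L 0 = 0 by rw [hL]; exact hF00, zero_add] at h2
  have hβneg : β < 0 := lt_of_lt_of_le (by simpa using hsA 1 one_pos) hs0
  have hs0' : 0 ≤ s := by
    by_contra hc
    push_neg at hc
    have ht : 0 < s / (2 * β) := div_pos_iff.mpr (Or.inr ⟨hc, by linarith⟩)
    have h1 := hsA _ ht
    have h2 : s / (2 * β) * β = s / 2 := by
      have hne : (2*β) ≠ 0 := mul_ne_zero two_ne_zero hβneg.ne
      rw [div_mul_eq_mul_div, div_eq_div_iff hne two_ne_zero]
      ring
    rw [h2] at h1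
    linarith
  have hseq : s = 0 := le_antisymm hs0 hs0'
  -- part 1 : L u ≤ (-β) * φ u
  have hpart1 : ∀ u, L u ≤ (-β) * φ u := by
    intro u
    have key : ∀ δ : ℝ, 0 < δ → L u + (φ u + δ) * β < 0 := by
      intro δ hδ
      have : (u, φ u + δ) ∈ A := by simp [hA, hδ]
      have h2 := hFA _ this
      rw [hFdec] at h2
      linarith [hseq ▸ h2]
    have h3 : ∀ ε : ℝ, 0 < ε → L u + φ u * β ≤ 0 + ε := by
      intro ε hε
      have hδ : 0 < ε / (-β) := div_pos hε (by linarith)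
      have := key _ hδ
      have h4 : (ε / (-β)) * β = -ε := by
        rw [div_mul_eq_mul_div, div_eq_iff (by linarith : (-β) ≠ 0)]
        ring
      nlinarith
    have := le_of_forall_pos_le_add h3
    linarith
  -- part 2 : (-β) * ψ u ≤ L u for u ∈ C
  have hpart2 : ∀ u ∈ C, (-β) * ψ u ≤ L u := by
    intro u hu
    have := hFB (u, ψ u) ⟨hu, le_refl _⟩
    rw [hFdec, hseq] at this
    linarith
  -- build the vector
  set G : EuclideanSpace ℝ (Fin d) →L[ℝ] ℝ :=
    (-β)⁻¹ • (F.comp (ContinuousLinearMap.inl ℝ (EuclideanSpace ℝ (Fin d)) ℝ)) with hG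
  refine ⟨(InnerProductSpace.toDual ℝ (EuclideanSpace ℝ (Fin d))).symm G, ?_, ?_⟩
  all_goals
    have hginner : ∀ u, ⟪(InnerProductSpace.toDual ℝ (EuclideanSpace ℝ (Fin d))).symm G, u⟫
        = (-β)⁻¹ * L u := by
      intro u
      rw [InnerProductSpace.toDual_symm_apply]
      simp [hG, hL, ContinuousLinearMap.smul_apply, smul_eq_mul]
  · intro u
    rw [hginner]
    rw [inv_mul_le_iff₀ (by linarith : (0:ℝ) < -β)]
    exact hpart1 u
  · intro u hu
    rw [hginner]
    rw [le_inv_mul_iff₀ (by linarith : (0:ℝ) < -β)]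
    exact hpart2 u hu

end Stmt12Aux

set_option maxHeartbeats 1600000 in
open Stmt12Aux in
/-- the `p`-norm version of the key lemma: if the `q`-norm of the
first-order optimality residual is bounded below by `ρ` on the `ε`-level set, then
`‖w − w†_ε‖_p ≤ (1/ρ)·(f w − f w†_ε)` for every `w ∈ Ω`, where `w†_ε` minimizes
`‖· − w‖_p` over `S_ε`. -/
theorem stmt_12 {d : ℕ} (p q : ℝ) (hp1 : 1 < p) (hp2 : p ≤ 2)
    (hpq : 1 / p + 1 / q = 1)
    (f : EuclideanSpace ℝ (Fin d) → ℝ)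
    (Ω : Set (EuclideanSpace ℝ (Fin d)))
    (hΩne : Ω.Nonempty) (hΩcl : IsClosed Ω) (hΩcvx : Convex ℝ Ω)
    (hf : ConvexOn ℝ Set.univ f)
    (fstar : ℝ) (hmin : ∀ z ∈ Ω, fstar ≤ f z)
    (hOs_ne : {z ∈ Ω | f z = fstar}.Nonempty)
    (hOs_cvx : Convex ℝ {z ∈ Ω | f z = fstar})
    (hOs_cpt : IsCompact {z ∈ Ω | f z = fstar})
    (ε : ℝ) (hε : 0 < ε)
    (hLne : {z ∈ Ω | f z = fstar + ε}.Nonempty)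
    (ρ : ℝ) (hρ : 0 < ρ)
    (hres : ∀ z ∈ {z ∈ Ω | f z = fstar + ε}, ∀ g v : EuclideanSpace ℝ (Fin d),
      IsSubgradAt f z g → InNormalCone Ω z v → ρ ≤ pnorm q (g + v))
    (w : EuclideanSpace ℝ (Fin d)) (hw : w ∈ Ω)
    (wd : EuclideanSpace ℝ (Fin d))
    (hwd : wd ∈ {z ∈ Ω | f z ≤ fstar + ε})
    (hwd_min : ∀ z ∈ {z ∈ Ω | f z ≤ fstar + ε}, pnorm p (wd - w) ≤ pnorm p (z - w)) :
    pnorm p (w - wd) ≤ (1 / ρ) * (f w - f wd) := by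
  classical
  obtain ⟨hwdΩ, hwdle⟩ := hwd
  set c := fstar + ε with hc
  have hp0 : (0:ℝ) < p := lt_trans one_pos hp1
  have h1p1 : 1 / p < 1 := by rw [div_lt_one hp0]; exact hp1
  have h1ppos : 0 < 1 / p := by positivity
  have h1q : 1 / q = 1 - 1 / p := by linarith
  have h1qpos : 0 < 1 / q := by rw [h1q]; linarith
  have hq0 : (0:ℝ) < q := by
    have := one_div_pos.mp h1qpos
    exact this
  have hpq' : p + q = p * q := by
    field_simp at hpq
    linarith
  have hqp : (q - 1) * p = q := by nlinarith
  -- trivial case : w already in the sublevel set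
  by_cases hfw : f w ≤ c
  · have h0 : pnorm p (wd - w) ≤ 0 := by
      have := hwd_min w ⟨hw, hfw⟩
      rwa [sub_self, pnorm_zero hp0.ne'] at this
    have hwdw : wd = w := by
      by_contra hne
      exact absurd h0 (not_le.mpr (pnorm_pos hp0 (sub_ne_zero.mpr hne)))
    rw [hwdw, sub_self, pnorm_zero hp0.ne', sub_self, mul_zero]
  · push_neg at hfw
    -- `wd` lies exactly on the level set
    have hfwd : f wd = c := by
      by_contra hne
      have hlt : f wd < c := lt_of_le_of_ne hwdle hne
      have hwdne : wd ≠ w := by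
        intro h; rw [h] at hlt; exact absurd hfw (not_lt.mpr hlt.le)
      have hD : 0 < pnorm p (wd - w) := pnorm_pos hp0 (sub_ne_zero.mpr hwdne)
      set t := (c - f wd) / (f w - f wd) with ht
      have hnum : 0 < c - f wd := by linarith
      have hden : 0 < f w - f wd := by linarith
      have h0t : 0 < t := div_pos hnum hden
      have ht1 : t < 1 := by
        rw [ht, div_lt_one hden]; linarith
      set z := (1 - t) • wd + t • w with hz
      have hzΩ : z ∈ Ω := hΩcvx hwdΩ hw (by linarith) h0t.le (by ring)
      have hfz : f z ≤ c := by
        have h1 := hf.2 (Set.mem_univ wd) (Set.mem_univ w) (by linarith : (0:ℝ) ≤ 1 - t) h0t.le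
          (by ring : (1 - t) + t = 1)
        simp only [smul_eq_mul] at h1
        have h2 : (1 - t) * f wd + t * f w = f wd + t * (f w - f wd) := by ring
        have h3 : t * (f w - f wd) = c - f wd := by
          rw [ht, div_mul_cancel₀ _ hden.ne']
        calc f z ≤ (1 - t) * f wd + t * f w := h1
          _ = c := by rw [h2, h3]; ring
      have hmin2 := hwd_min z ⟨hzΩ, hfz⟩
      have hzw : z - w = (1 - t) • (wd - w) := by
        rw [hz]; module
      rw [hzw, pnorm_smul hp0, abs_of_nonneg (by linarith : (0:ℝ) ≤ 1 - t)] at hmin2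
      nlinarith
    -- the Slater point
    obtain ⟨zs, hzsΩ, hzsf⟩ := hOs_ne
    -- the distance function
    set h : EuclideanSpace ℝ (Fin d) → ℝ := fun z => pnorm p (z - w) with hh
    have hhw : h w = 0 := by rw [hh]; simp only; rw [sub_self, pnorm_zero hp0.ne']
    set D := h wd with hD
    have hwdne : wd ≠ w := by
      intro heq; rw [heq] at hfwd; exact absurd hfw (not_lt.mpr hfwd.le)
    have hDpos : 0 < D := pnorm_pos hp0 (sub_ne_zero.mpr hwdne)
    have hhcvx : ConvexOn ℝ Set.univ h := pnorm_sub_convexOn hp1.le w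
    have hhcont : Continuous h := by
      rw [← continuousOn_univ]; exact hhcvx.continuousOn isOpen_univ
    have hfcont : Continuous f := by
      rw [← continuousOn_univ]; exact hf.continuousOn isOpen_univ
    -- Lagrange multiplier via 2-dimensional separation
    obtain ⟨lam, hlam0, hstar⟩ : ∃ l : ℝ, 0 ≤ l ∧ ∀ z ∈ Ω, D ≤ h z + l * (f z - c) := by
      set A2 : Set (ℝ × ℝ) := {uv | ∃ z ∈ Ω, f z - c < uv.1 ∧ h z < uv.2} with hA2
      set B2 : Set (ℝ × ℝ) := {uv | uv.1 ≤ 0 ∧ uv.2 ≤ D} with hB2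
      have hA2o : IsOpen A2 := by
        have he : A2 = ⋃ z ∈ Ω, (Set.Ioi (f z - c)) ×ˢ (Set.Ioi (h z)) := by
          ext uv
          simp only [hA2, Set.mem_setOf_eq, Set.mem_iUnion, Set.mem_prod, Set.mem_Ioi]
          tauto
        rw [he]
        exact isOpen_biUnion fun z _ => isOpen_Ioi.prod isOpen_Ioi
      have hA2c : Convex ℝ A2 := by
        rintro ⟨u1, t1⟩ ⟨z1, hz1, h11, h12⟩ ⟨u2, t2⟩ ⟨z2, hz2, h21, h22⟩ a b ha hb hab
        simp only [hA2, Set.mem_setOf_eq, Prod.smul_mk, Prod.mk_add_mk, smul_eq_mul] at *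
        refine ⟨a • z1 + b • z2, hΩcvx hz1 hz2 ha hb hab, ?_, ?_⟩
        · have e2 : f (a • z1 + b • z2) ≤ a * f z1 + b * f z2 := by
            have e0 := hf.2 (Set.mem_univ z1) (Set.mem_univ z2) ha hb hab
            simpa using e0
          have e3 : a * (f z1 - c) + b * (f z2 - c) < a * u1 + b * u2 :=
            combo_lt ha hb hab h11 h21
          have e4 : a * (f z1 - c) + b * (f z2 - c) = a * f z1 + b * f z2 - c := by
            linear_combination (-c) * hab
          linarith
        · have e1 : h (a • z1 + b • z2) ≤ a * h z1 + b * h z2 := by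
            have e0 := hhcvx.2 (Set.mem_univ z1) (Set.mem_univ z2) ha hb hab
            simpa using e0
          have e3 : a * h z1 + b * h z2 < a * t1 + b * t2 := combo_lt ha hb hab h12 h22
          linarith
      have hB2c : Convex ℝ B2 := by
        rintro ⟨u1, t1⟩ ⟨hu1, ht1⟩ ⟨u2, t2⟩ ⟨hu2, ht2⟩ a b ha hb hab
        simp only [hB2, Set.mem_setOf_eq, Prod.smul_mk, Prod.mk_add_mk, smul_eq_mul] at *
        constructor
        · have e1 := mul_le_mul_of_nonneg_left hu1 ha
          have e2 := mul_le_mul_of_nonneg_left hu2 hb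
          simp only [mul_zero] at e1 e2
          linarith
        · have e1 := mul_le_mul_of_nonneg_left ht1 ha
          have e2 := mul_le_mul_of_nonneg_left ht2 hb
          have e3 : a * D + b * D = D := by rw [← add_mul, hab, one_mul]
          linarith
      have hdisj2 : Disjoint A2 B2 := by
        rw [Set.disjoint_left]
        rintro ⟨u, t⟩ ⟨z, hzΩ2, hz1, hz2⟩ ⟨hu, ht⟩
        simp only at hz1 hz2 hu ht
        have hzS : f z ≤ c := by linarith
        have hmin3 := hwd_min z ⟨hzΩ2, hzS⟩
        have hDz : D ≤ h z := hmin3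
        linarith
      obtain ⟨F, s, hFA, hFB⟩ := geometric_hahn_banach_open hA2c hA2o hB2c hdisj2
      set μ : ℝ := F (1, 0) with hμ
      set ν : ℝ := F (0, 1) with hν
      have hFdec : ∀ a t : ℝ, F (a, t) = a * μ + t * ν := by
        intro a t
        have he : ((a, t) : ℝ × ℝ) = a • ((1:ℝ), (0:ℝ)) + t • ((0:ℝ), (1:ℝ)) := by
          simp [Prod.ext_iff]
        rw [he, map_add, map_smul, map_smul, smul_eq_mul, smul_eq_mul, hμ, hν]
      have hcorner : ∀ z ∈ Ω, (f z - c) * μ + h z * ν ≤ s := by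
        intro z hz
        apply le_of_forall_pos_le_add
        intro ε' hε'
        set K := |μ| + |ν| with hK
        have hK0 : (0:ℝ) ≤ K := by positivity
        have hδpos : 0 < ε' / (1 + K) := by positivity
        set δ := ε' / (1 + K) with hδ
        have hmem : ((f z - c + δ, h z + δ) : ℝ × ℝ) ∈ A2 :=
          ⟨z, hz, by simp only; linarith, by simp only; linarith⟩
        have h1 := hFA _ hmem
        rw [hFdec] at h1
        have hs1 : δ * -|μ| ≤ δ * μ := mul_le_mul_of_nonneg_left (neg_abs_le μ) hδpos.le
        have hs2 : δ * -|ν| ≤ δ * ν := mul_le_mul_of_nonneg_left (neg_abs_le ν) hδpos.le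
        have hδK : δ * (1 + K) = ε' := by
          rw [hδ, div_mul_cancel₀]
          positivity
        have hexp : δ * K = δ * |μ| + δ * |ν| := by rw [hK]; ring
        nlinarith [h1, hs1, hs2, hδpos.le]
      have hsD : s ≤ D * ν := by
        have h1 := hFB (0, D) ⟨le_refl 0, le_refl D⟩
        rw [hFdec] at h1
        linarith
      have hν0 : ν ≤ 0 := by
        by_contra hcon
        push_neg at hcon
        have hmem : (((0:ℝ), min D ((s - 1) / ν)) : ℝ × ℝ) ∈ B2 := ⟨le_refl 0, min_le_left _ _⟩
        have h1 := hFB _ hmem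
        rw [hFdec] at h1
        have h2 : min D ((s - 1) / ν) * ν ≤ ((s - 1) / ν) * ν :=
          mul_le_mul_of_nonneg_right (min_le_right _ _) hcon.le
        have h3 : ((s - 1) / ν) * ν = s - 1 := div_mul_cancel₀ _ hcon.ne'
        linarith
      have hμ0 : μ ≤ 0 := by
        by_contra hcon
        push_neg at hcon
        have hmem : ((min 0 ((s - 1 - D * ν) / μ), D) : ℝ × ℝ) ∈ B2 := ⟨min_le_left _ _, le_refl D⟩
        have h1 := hFB _ hmem
        rw [hFdec] at h1
        have h2 : min 0 ((s - 1 - D * ν) / μ) * μ ≤ ((s - 1 - D * ν) / μ) * μ :=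
          mul_le_mul_of_nonneg_right (min_le_right _ _) hcon.le
        have h3 : ((s - 1 - D * ν) / μ) * μ = s - 1 - D * ν := div_mul_cancel₀ _ hcon.ne'
        linarith
      have hνneg : ν < 0 := by
        rcases lt_or_eq_of_le hν0 with hlt | heq
        · exact hlt
        · exfalso
          have hfzs : f zs - c = -ε := by rw [hzsf]; ring
          have h1 := hcorner zs hzsΩ
          rw [hfzs, heq] at h1
          have hμz : μ = 0 := by
            have hμge : 0 ≤ μ := by nlinarith [hsD, hε]
            exact le_antisymm hμ0 hμge
          have hmemA : ((f zs - c + 1, h zs + 1) : ℝ × ℝ) ∈ A2 :=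
            ⟨zs, hzsΩ, by simp only; linarith, by simp only; linarith⟩
          have h2 := hFA _ hmemA
          rw [hFdec, hμz, heq] at h2
          have h3 : s ≤ 0 := by rw [heq] at hsD; linarith
          simp only [mul_zero, add_zero] at h2
          linarith
      refine ⟨μ / ν, ?_, ?_⟩
      · rw [div_nonneg_iff]
        right
        exact ⟨hμ0, hνneg.le⟩
      · intro z hz
        have h3 : (f z - c) * μ + h z * ν ≤ D * ν := le_trans (hcorner z hz) hsD
        have hμeq : μ = (μ / ν) * ν := (div_mul_cancel₀ μ hνneg.ne).symm
        rw [hμeq] at h3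
        have hνpos : 0 < -ν := by linarith
        have h5 : 0 ≤ (h z + μ / ν * (f z - c) - D) * (-ν) := by nlinarith [h3]
        nlinarith [h5, hνpos]
    have hlampos : 0 < lam := by
      have h1 := hstar w hw
      rw [hhw] at h1
      by_contra hcon
      push_neg at hcon
      nlinarith
    have hkeyD : D ≤ lam * (f w - c) := by
      have h1 := hstar w hw
      rw [hhw] at h1; linarith
    -- sandwich 1 : extract the combined multiplier functional m
    set C1 : Set (EuclideanSpace ℝ (Fin d)) := {u | wd + u ∈ Ω} with hC1
    have hC1cvx : Convex ℝ C1 := by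
      intro x hx y hy a b ha hb hab
      have hrepr : wd + (a • x + b • y) = a • (wd + x) + b • (wd + y) := by
        have h2 : a • (wd + x) + b • (wd + y) = (a + b) • wd + (a • x + b • y) := by module
        rw [h2, hab, one_smul]
      show wd + (a • x + b • y) ∈ Ω
      rw [hrepr]
      exact hΩcvx hx hy ha hb hab
    have h0C1 : (0 : EuclideanSpace ℝ (Fin d)) ∈ C1 := by
      show wd + 0 ∈ Ω; rwa [add_zero]
    have htrans : ∀ (x y : EuclideanSpace ℝ (Fin d)) (a b : ℝ), a + b = 1 →
        wd + (a • x + b • y) = a • (wd + x) + b • (wd + y) := by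
      intro x y a b hab
      have h2 : a • (wd + x) + b • (wd + y) = (a + b) • wd + (a • x + b • y) := by module
      rw [h2, hab, one_smul]
    set φ1 : EuclideanSpace ℝ (Fin d) → ℝ :=
      fun u => h (wd + u) + lam * f (wd + u) - (D + lam * f wd) with hφ1
    have hφ1cvx : ConvexOn ℝ Set.univ φ1 := by
      refine ⟨convex_univ, fun x _ y _ a b ha hb hab => ?_⟩
      simp only [hφ1, smul_eq_mul]
      rw [htrans x y a b hab]
      have e1 : h (a • (wd + x) + b • (wd + y)) ≤ a * h (wd + x) + b * h (wd + y) := by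
        have e0 := hhcvx.2 (Set.mem_univ (wd+x)) (Set.mem_univ (wd+y)) ha hb hab
        simpa using e0
      have e2 : f (a • (wd + x) + b • (wd + y)) ≤ a * f (wd + x) + b * f (wd + y) := by
        have e0 := hf.2 (Set.mem_univ (wd+x)) (Set.mem_univ (wd+y)) ha hb hab
        simpa using e0
      have e3 : lam * f (a • (wd + x) + b • (wd + y)) ≤ lam * (a * f (wd + x) + b * f (wd + y)) :=
        mul_le_mul_of_nonneg_left e2 hlam0
      have e4 : lam * (a * f (wd + x) + b * f (wd + y))
          = a * (lam * f (wd + x)) + b * (lam * f (wd + y)) := by ring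
      have e5 : (D + lam * f wd) = a * (D + lam * f wd) + b * (D + lam * f wd) := by
        rw [← add_mul, hab]; ring
      nlinarith [e1, e3]
    have hφ1cont : Continuous φ1 := by
      apply Continuous.sub
      · exact ((hhcont.comp (continuous_const.add continuous_id)).add
          (continuous_const.mul (hfcont.comp (continuous_const.add continuous_id))))
      · exact continuous_const
    have hφ10 : φ1 0 = 0 := by
      simp only [hφ1, add_zero]
      ring_nf
      simp [hD]
    have hle1 : ∀ u ∈ C1, (fun _ => (0:ℝ)) u ≤ φ1 u := by
      intro u hu
      have h1 := hstar (wd + u) hu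
      simp only [hφ1]
      have h2 : lam * (f (wd + u) - c) = lam * f (wd + u) - lam * f wd := by
        rw [hfwd]; ring
      linarith [h1, h2 ▸ h1]
    obtain ⟨m, hm1, hm2⟩ := sandwich φ1 (fun _ => (0:ℝ)) C1 hC1cvx h0C1 hφ1cvx hφ1cont
      (concaveOn_const 0 hC1cvx) hle1 hφ10 rfl
    -- sandwich 2 : split m into the subgradient part and the distance part
    set φ2 : EuclideanSpace ℝ (Fin d) → ℝ := fun u => lam * (f (wd + u) - f wd) with hφ2
    set ψ2 : EuclideanSpace ℝ (Fin d) → ℝ := fun u => ⟪m, u⟫ - (h (wd + u) - D) with hψ2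
    have hφ2cvx : ConvexOn ℝ Set.univ φ2 := by
      refine ⟨convex_univ, fun x _ y _ a b ha hb hab => ?_⟩
      simp only [hφ2, smul_eq_mul]
      rw [htrans x y a b hab]
      have e2 : f (a • (wd + x) + b • (wd + y)) ≤ a * f (wd + x) + b * f (wd + y) := by
        have e0 := hf.2 (Set.mem_univ (wd+x)) (Set.mem_univ (wd+y)) ha hb hab
        simpa using e0
      have e3 : lam * f (a • (wd + x) + b • (wd + y)) ≤ lam * (a * f (wd + x) + b * f (wd + y)) :=
        mul_le_mul_of_nonneg_left e2 hlam0
      have e4 : lam * (a * f (wd + x) + b * f (wd + y))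
          = a * (lam * f (wd + x)) + b * (lam * f (wd + y)) := by ring
      have e5 : lam * f wd = a * (lam * f wd) + b * (lam * f wd) := by
        rw [← add_mul, hab]; ring
      nlinarith [e3]
    have hφ2cont : Continuous φ2 := by
      exact continuous_const.mul ((hfcont.comp (continuous_const.add continuous_id)).sub
        continuous_const)
    have hψ2ccv : ConcaveOn ℝ Set.univ ψ2 := by
      refine ⟨convex_univ, fun x _ y _ a b ha hb hab => ?_⟩
      simp only [hψ2, smul_eq_mul]
      rw [htrans x y a b hab]
      have e1 : h (a • (wd + x) + b • (wd + y)) ≤ a * h (wd + x) + b * h (wd + y) := by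
        have e0 := hhcvx.2 (Set.mem_univ (wd+x)) (Set.mem_univ (wd+y)) ha hb hab
        simpa using e0
      have e2 : ⟪m, a • x + b • y⟫ = a * ⟪m, x⟫ + b * ⟪m, y⟫ := by
        rw [inner_add_right, real_inner_smul_right, real_inner_smul_right]
      have e5 : D = a * D + b * D := by rw [← add_mul, hab]; ring
      nlinarith [e1]
    have hle2 : ∀ u ∈ (Set.univ : Set (EuclideanSpace ℝ (Fin d))), ψ2 u ≤ φ2 u := by
      intro u _
      have h1 := hm1 u
      simp only [hφ1] at h1
      simp only [hψ2, hφ2]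
      linarith
    have hφ20 : φ2 0 = 0 := by simp [hφ2]
    have hψ20 : ψ2 0 = 0 := by
      simp only [hψ2, add_zero, inner_zero_right]
      rw [hD]; ring
    obtain ⟨g', hg1, hg2⟩ := sandwich φ2 ψ2 Set.univ convex_univ (Set.mem_univ _) hφ2cvx hφ2cont
      hψ2ccv hle2 hφ20 hψ20
    -- assemble the subgradient and normal vector
    set g : EuclideanSpace ℝ (Fin d) := lam⁻¹ • g' with hg
    set v : EuclideanSpace ℝ (Fin d) := -(lam⁻¹ • m) with hv
    have hsub : IsSubgradAt f wd g := by
      intro u'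
      have h1 := hg1 (u' - wd)
      simp only [hφ2] at h1
      rw [add_sub_cancel] at h1
      have h2 : ⟪g, u' - wd⟫ = lam⁻¹ * ⟪g', u' - wd⟫ := real_inner_smul_left _ _ _
      have h3 : lam⁻¹ * ⟪g', u' - wd⟫ ≤ lam⁻¹ * (lam * (f u' - f wd)) :=
        mul_le_mul_of_nonneg_left h1 (inv_nonneg.mpr hlam0)
      rw [← mul_assoc, inv_mul_cancel₀ hlampos.ne', one_mul] at h3
      rw [h2]; linarith
    have hnc : InNormalCone Ω wd v := by
      intro z hz
      have h1 : z - wd ∈ C1 := by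
        show wd + (z - wd) ∈ Ω; rwa [add_sub_cancel]
      have h2 := hm2 (z - wd) h1
      have h3 : ⟪v, z - wd⟫ = -(lam⁻¹ * ⟪m, z - wd⟫) := by
        rw [hv, inner_neg_left, real_inner_smul_left]
      rw [h3]
      have : 0 ≤ lam⁻¹ * ⟪m, z - wd⟫ := mul_nonneg (inv_nonneg.mpr hlam0) h2
      linarith
    -- the dual bound
    set j : EuclideanSpace ℝ (Fin d) := m - g' with hj
    have hjsub : ∀ u, ⟪j, u⟫ ≤ pnorm p u := by
      intro u
      have h1 := hg2 u (Set.mem_univ _)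
      simp only [hψ2] at h1
      have h2 : ⟪j, u⟫ = ⟪m, u⟫ - ⟪g', u⟫ := inner_sub_left _ _ _
      have h3 : h (wd + u) ≤ D + pnorm p u := by
        have e1 : wd + u - w = (wd - w) + u := by abel
        show pnorm p (wd + u - w) ≤ D + pnorm p u
        rw [e1]
        calc pnorm p ((wd - w) + u) ≤ pnorm p (wd - w) + pnorm p u := pnorm_add_le hp1.le _ _
          _ = D + pnorm p u := rfl
      rw [h2]; linarith
    have hjq : pnorm q j ≤ 1 := dual_bound hp0 hq0 hpq hqp hjsub
    have hgv : g + v = (-(lam⁻¹)) • j := by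
      rw [hg, hv, hj]; module
    have hgvq : pnorm q (g + v) ≤ lam⁻¹ := by
      rw [hgv, pnorm_smul hq0, abs_neg, abs_of_nonneg (inv_nonneg.mpr hlam0)]
      calc lam⁻¹ * pnorm q j ≤ lam⁻¹ * 1 :=
            mul_le_mul_of_nonneg_left hjq (inv_nonneg.mpr hlam0)
        _ = lam⁻¹ := mul_one _
    -- use the residual lower bound
    have hρlam := hres wd ⟨hwdΩ, hfwd⟩ g v hsub hnc
    have hρlam2 : ρ * lam ≤ 1 := by
      have h1 : ρ ≤ lam⁻¹ := le_trans hρlam hgvq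
      have h2 := mul_le_mul_of_nonneg_right h1 hlam0
      rwa [inv_mul_cancel₀ hlampos.ne'] at h2
    -- conclude
    have hgoal : pnorm p (w - wd) = D := by
      rw [hD, hh]
      show pnorm p (w - wd) = pnorm p (wd - w)
      rw [← pnorm_neg p (wd - w), neg_sub]
    rw [hgoal, hfwd, one_div, inv_mul_eq_div, le_div_iff₀ hρ]
    have hX : 0 ≤ f w - c := by linarith
    nlinarith [mul_le_mul_of_nonneg_right hkeyD hρ.le, mul_le_mul_of_nonneg_left hρlam2 hX]

end
end

section
/- Let ε > 0 with L_ε ≠ ∅. Then for every w ∈ Ω, ‖w − w†_ε‖_p ≤ (‖w†_ε − w*_ε‖_p/ε)·(f(w) − f(w†_ε)) ≤ (B_ε/ε)·(f(w) − f(w†_ε)), where w*_ε is the point of Ω_* closest to w†_ε in ‖·‖_p and B_ε = max_{u ∈ L_ε} min_{z ∈ Ω_*} ‖u − z‖_p. -/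
open RealInnerProductSpace

noncomputable section

lemma pnorm_nonneg {d : ℕ} (p : ℝ) (x : EuclideanSpace ℝ (Fin d)) : 0 ≤ pnorm p x :=
  Real.rpow_nonneg (Finset.sum_nonneg fun i _ => Real.rpow_nonneg (abs_nonneg _) _) _

lemma pnorm_zero {d : ℕ} {p : ℝ} (hp : p ≠ 0) : pnorm p (0 : EuclideanSpace ℝ (Fin d)) = 0 := by
  have h0 : ∀ i : Fin d, |(0 : EuclideanSpace ℝ (Fin d)) i| ^ p = 0 := by
    intro i
    have : (0 : EuclideanSpace ℝ (Fin d)) i = 0 := rfl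
    rw [this, abs_zero, Real.zero_rpow hp]
  simp only [pnorm, h0, Finset.sum_const_zero]
  exact Real.zero_rpow (one_div_ne_zero hp)

lemma pnorm_eq_zero {d : ℕ} {p : ℝ} (hp : 0 < p) {x : EuclideanSpace ℝ (Fin d)}
    (h : pnorm p x = 0) : x = 0 := by
  have hnn : ∀ i ∈ Finset.univ, (0:ℝ) ≤ |x i| ^ p :=
    fun i _ => Real.rpow_nonneg (abs_nonneg _) _
  have hsum : ∑ i, |x i| ^ p = 0 := by
    by_contra hne
    have hpos : 0 < ∑ i, |x i| ^ p :=
      lt_of_le_of_ne (Finset.sum_nonneg hnn) (Ne.symm hne)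
    have := Real.rpow_pos_of_pos hpos (1 / p)
    rw [show (∑ i, |x i| ^ p) ^ (1/p) = pnorm p x from rfl, h] at this
    exact lt_irrefl 0 this
  have hterm := (Finset.sum_eq_zero_iff_of_nonneg hnn).mp hsum
  ext i
  have hi := hterm i (Finset.mem_univ i)
  have : |x i| = 0 := by
    by_contra h'
    have : (0:ℝ) < |x i| := lt_of_le_of_ne (abs_nonneg _) (Ne.symm h')
    exact absurd hi (ne_of_gt (Real.rpow_pos_of_pos this p))
  simpa using abs_eq_zero.mp this

lemma pnorm_neg {d : ℕ} (p : ℝ) (x : EuclideanSpace ℝ (Fin d)) : pnorm p (-x) = pnorm p x := by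
  unfold pnorm
  congr 1
  refine Finset.sum_congr rfl fun i _ => ?_
  have : (-x) i = -(x i) := rfl
  rw [this, abs_neg]

lemma pnorm_sub_comm {d : ℕ} (p : ℝ) (x y : EuclideanSpace ℝ (Fin d)) :
    pnorm p (x - y) = pnorm p (y - x) := by
  rw [← pnorm_neg p (x - y), neg_sub]

lemma pnorm_smul {d : ℕ} {p : ℝ} (hp : 0 < p) {t : ℝ} (ht : 0 ≤ t)
    (x : EuclideanSpace ℝ (Fin d)) : pnorm p (t • x) = t * pnorm p x := by
  unfold pnorm
  have h1 : ∀ i : Fin d, |(t • x) i| ^ p = t ^ p * |x i| ^ p := by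
    intro i
    have hi : (t • x) i = t * x i := rfl
    rw [hi, abs_mul, abs_of_nonneg ht, Real.mul_rpow ht (abs_nonneg _)]
  simp_rw [h1, ← Finset.mul_sum]
  rw [Real.mul_rpow (Real.rpow_nonneg ht p)
      (Finset.sum_nonneg fun i _ => Real.rpow_nonneg (abs_nonneg _) _),
    ← Real.rpow_mul ht, mul_one_div, div_self hp.ne', Real.rpow_one]

lemma pnorm_add_le {d : ℕ} {p : ℝ} (hp : 1 ≤ p) (x y : EuclideanSpace ℝ (Fin d)) :
    pnorm p (x + y) ≤ pnorm p x + pnorm p y := by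
  have := Real.Lp_add_le Finset.univ (fun i => x i) (fun i => y i) hp
  exact this

theorem stmt_13 {d : ℕ} (p q : ℝ) (hp1 : 1 < p) (hp2 : p ≤ 2)
    (hpq : 1 / p + 1 / q = 1)
    (f : EuclideanSpace ℝ (Fin d) → ℝ)
    (Ω : Set (EuclideanSpace ℝ (Fin d)))
    (hΩne : Ω.Nonempty) (hΩcl : IsClosed Ω) (hΩcvx : Convex ℝ Ω)
    (hf : ConvexOn ℝ Set.univ f)
    (fstar : ℝ) (hmin : ∀ z ∈ Ω, fstar ≤ f z)
    (hOs_ne : {z ∈ Ω | f z = fstar}.Nonempty)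
    (hOs_cvx : Convex ℝ {z ∈ Ω | f z = fstar})
    (hOs_cpt : IsCompact {z ∈ Ω | f z = fstar})
    (ε : ℝ) (hε : 0 < ε)
    (hLne : {z ∈ Ω | f z = fstar + ε}.Nonempty)
    (Bε : ℝ)
    (hB : IsGreatest
      ((fun u => sInf ((fun z => pnorm p (u - z)) '' {z ∈ Ω | f z = fstar})) ''
        {z ∈ Ω | f z = fstar + ε}) Bε)
    (w : EuclideanSpace ℝ (Fin d)) (hw : w ∈ Ω)
    (wd : EuclideanSpace ℝ (Fin d))
    (hwd : wd ∈ {z ∈ Ω | f z ≤ fstar + ε})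
    (hwd_min : ∀ z ∈ {z ∈ Ω | f z ≤ fstar + ε}, pnorm p (wd - w) ≤ pnorm p (z - w))
    (ws : EuclideanSpace ℝ (Fin d)) (hws : ws ∈ {z ∈ Ω | f z = fstar})
    (hws_min : ∀ z ∈ {z ∈ Ω | f z = fstar}, pnorm p (wd - ws) ≤ pnorm p (wd - z)) :
    pnorm p (w - wd) ≤ pnorm p (wd - ws) / ε * (f w - f wd) ∧
      pnorm p (wd - ws) / ε * (f w - f wd) ≤ Bε / ε * (f w - f wd) := by
  have hp0 : (0:ℝ) < p := lt_trans one_pos hp1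
  obtain ⟨hwdΩ, hwdf⟩ := hwd
  obtain ⟨hwsΩ, hwsf⟩ := hws
  by_cases hcase : f w ≤ fstar + ε
  · -- w itself is in S_ε, hence wd = w and everything vanishes
    have h0 : pnorm p (wd - w) ≤ pnorm p (w - w) := hwd_min w ⟨hw, hcase⟩
    rw [sub_self, pnorm_zero hp0.ne'] at h0
    have h0' : pnorm p (wd - w) = 0 := le_antisymm h0 (pnorm_nonneg _ _)
    have hwdw : wd = w := by
      have := pnorm_eq_zero hp0 h0'
      exact sub_eq_zero.mp this
    rw [hwdw]
    constructor
    · rw [sub_self, pnorm_zero hp0.ne', sub_self, mul_zero]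
    · rw [sub_self, mul_zero, mul_zero]
  · push_neg at hcase
    -- f w > fstar + ε
    have hfwwd : f wd < f w := lt_of_le_of_lt hwdf hcase
    have hwdne : wd ≠ w := fun h => absurd (h ▸ hwdf) (not_le.mpr (h ▸ hcase))
    have hpnpos : 0 < pnorm p (wd - w) := by
      rcases lt_or_eq_of_le (pnorm_nonneg p (wd - w)) with h | h
      · exact h
      · exact absurd (sub_eq_zero.mp (pnorm_eq_zero hp0 h.symm)) hwdne
    -- Step B : f wd = fstar + ε
    have hwdeq : f wd = fstar + ε := by
      rcases lt_or_eq_of_le hwdf with hlt | heq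
      · exfalso
        set t : ℝ := (fstar + ε - f wd) / (f w - f wd) with ht_def
        have hden : 0 < f w - f wd := sub_pos.mpr hfwwd
        have htpos : 0 < t := div_pos (sub_pos.mpr hlt) hden
        have htlt : t < 1 := by
          rw [div_lt_one hden]
          linarith
        set u := (1 - t) • wd + t • w with hu_def
        have huΩ : u ∈ Ω := hΩcvx hwdΩ hw (by linarith) htpos.le (by ring)
        have hfu : f u ≤ fstar + ε := by
          have := hf.2 (Set.mem_univ wd) (Set.mem_univ w) (by linarith : (0:ℝ) ≤ 1 - t)
            htpos.le (by ring)
          have ht_mul : t * (f w - f wd) = fstar + ε - f wd :=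
            div_mul_cancel₀ _ hden.ne'
          calc f u ≤ (1 - t) * f wd + t * f w := this
            _ = f wd + t * (f w - f wd) := by ring
            _ = fstar + ε := by rw [ht_mul]; ring
        have hle := hwd_min u ⟨huΩ, hfu⟩
        have huw : u - w = (1 - t) • (wd - w) := by
          rw [hu_def]; module
        rw [huw, pnorm_smul hp0 (by linarith : (0:ℝ) ≤ 1 - t)] at hle
        nlinarith
      · exact heq
    -- Step C : main estimate
    set F : ℝ := f w - fstar with hF_def
    have hFpos : 0 < F := by simp only [hF_def]; linarith
    have hεF : ε < F := by simp only [hF_def]; linarith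
    set t : ℝ := (F - ε) / F with ht_def
    have htpos : 0 < t := div_pos (by linarith) hFpos
    have ht1 : 1 - t = ε / F := by
      rw [ht_def, one_sub_div hFpos.ne']; congr 1; ring
    set v := (1 - t) • w + t • ws with hv_def
    have htle1 : t ≤ 1 := by
      rw [ht_def, div_le_one hFpos]; linarith
    have hvΩ : v ∈ Ω := hΩcvx hw hwsΩ (by linarith) htpos.le (by ring)
    have hfv : f v ≤ fstar + ε := by
      have := hf.2 (Set.mem_univ w) (Set.mem_univ ws) (by linarith : (0:ℝ) ≤ 1 - t)
        htpos.le (by ring)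
      have key : (1 - t) * f w + t * fstar = fstar + ε := by
        rw [ht1, ht_def]
        field_simp
        rw [hF_def]
        ring
      calc f v ≤ (1 - t) * f w + t * f ws := this
        _ = (1 - t) * f w + t * fstar := by rw [hwsf]
        _ = fstar + ε := key
    have hle := hwd_min v ⟨hvΩ, hfv⟩
    have hvw : v - w = t • (ws - w) := by rw [hv_def]; module
    rw [hvw, pnorm_smul hp0 htpos.le] at hle
    -- triangle inequality
    have htri : pnorm p (ws - w) ≤ pnorm p (wd - ws) + pnorm p (wd - w) := by
      have h1 : ws - w = (ws - wd) + (wd - w) := by module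
      calc pnorm p (ws - w) = pnorm p ((ws - wd) + (wd - w)) := by rw [h1]
        _ ≤ pnorm p (ws - wd) + pnorm p (wd - w) := pnorm_add_le hp1.le _ _
        _ = pnorm p (wd - ws) + pnorm p (wd - w) := by rw [pnorm_sub_comm p ws wd]
    have hkey : (1 - t) * pnorm p (wd - w) ≤ t * pnorm p (wd - ws) := by
      nlinarith [pnorm_nonneg p (wd - ws), pnorm_nonneg p (wd - w)]
    -- rewrite : pnorm (wd - w) ≤ ((F - ε)/ε) * pnorm (wd - ws)
    have hmain : pnorm p (wd - w) ≤ (F - ε) / ε * pnorm p (wd - ws) := by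
      have h := mul_le_mul_of_nonneg_right hkey hFpos.le
      have e1 : (1 - t) * F = ε := by rw [ht1]; field_simp
      have e2 : t * F = F - ε := by rw [ht_def]; field_simp
      have h2 : ε * pnorm p (wd - w) ≤ (F - ε) * pnorm p (wd - ws) := by
        calc ε * pnorm p (wd - w) = (1 - t) * pnorm p (wd - w) * F := by rw [← e1]; ring
          _ ≤ t * pnorm p (wd - ws) * F := h
          _ = (F - ε) * pnorm p (wd - ws) := by rw [← e2]; ring
      rw [div_mul_eq_mul_div, le_div_iff₀ hε]
      linarith
    have hfirst : pnorm p (w - wd) ≤ pnorm p (wd - ws) / ε * (f w - f wd) := by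
      rw [pnorm_sub_comm]
      calc pnorm p (wd - w) ≤ (F - ε) / ε * pnorm p (wd - ws) := hmain
        _ = pnorm p (wd - ws) / ε * (F - ε) := by ring
        _ ≤ pnorm p (wd - ws) / ε * (f w - f wd) := by
            apply mul_le_mul_of_nonneg_left _ (div_nonneg (pnorm_nonneg _ _) hε.le)
            simp only [hF_def]; linarith
    refine ⟨hfirst, ?_⟩
    -- second inequality : pnorm (wd - ws) ≤ Bε
    have hleast : IsLeast ((fun z => pnorm p (wd - z)) '' {z ∈ Ω | f z = fstar})
        (pnorm p (wd - ws)) := by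
      constructor
      · exact ⟨ws, ⟨hwsΩ, hwsf⟩, rfl⟩
      · rintro x ⟨z, hz, rfl⟩
        exact hws_min z hz
    have hinf : sInf ((fun z => pnorm p (wd - z)) '' {z ∈ Ω | f z = fstar})
        = pnorm p (wd - ws) := hleast.csInf_eq
    have hBle : pnorm p (wd - ws) ≤ Bε := by
      have h := hB.2 ⟨wd, ⟨hwdΩ, hwdeq⟩, rfl⟩
      simp only at h
      rwa [hinf] at h
    have hfd : 0 ≤ f w - f wd := by linarith
    apply mul_le_mul_of_nonneg_right _ hfd
    exact (div_le_div_iff_of_pos_right hε).mpr hBle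
end
end

section
/- Let p ∈ (1,2], let q satisfy 1/p + 1/q = 1, and let w, g ∈ ℝ^d with g ≠ 0. Define w⁺ ∈ ℝ^d coordinatewise by (w⁺)_i = w_i − ‖g‖_q^{(p−q)/p}·sign(g_i)·|g_i|^{q−1}. Then w⁺ is the unique minimizer over ℝ^d of the function u ↦ ⟨g, u⟩ + (1/2)‖u − w‖_p². -/
open RealInnerProductSpace

noncomputable section

/-- Strict Young: for conjugate exponents and `a ≠ b^(q-1)`, `a*b < a^p/p + b^q/q`. -/
theorem young_strict {p q : ℝ} (hpq : Real.HolderConjugate p q) {a b : ℝ}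
    (ha : 0 ≤ a) (hb : 0 ≤ b) (hne : a ≠ b ^ (q - 1)) :
    a * b < a ^ p / p + b ^ q / q := by
  have hp1 : 1 < p := hpq.lt
  have hq1 : 1 < q := hpq.symm.lt
  have hp0 : (0:ℝ) < p := by linarith
  have hq0 : (0:ℝ) < q := by linarith
  have hconj : 1/p + 1/q = 1 := by
    have := hpq.inv_add_inv_eq_one; rw [one_div, one_div]; exact this
  have hqp : (q - 1) * p = q := by
    have := hpq.inv_add_inv_eq_one; field_simp at this; nlinarith
  have hpq1 : (p - 1) * (q - 1) = 1 := by nlinarith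
  rcases eq_or_lt_of_le hb with hb0 | hb0
  · -- b = 0
    have hb0 : b = 0 := hb0.symm
    subst hb0
    have ha0 : 0 < a := by
      rcases eq_or_lt_of_le ha with h | h
      · exact absurd (h.symm.trans (Real.zero_rpow (by linarith)).symm) hne
      · exact h
    have : 0 < a ^ p := Real.rpow_pos_of_pos ha0 p
    rw [Real.zero_rpow (by positivity : q ≠ 0)]
    rw [mul_zero, zero_div, add_zero]
    positivity
  · -- b > 0
    set c : ℝ := b ^ (q - 1) with hc
    have hc0 : 0 < c := Real.rpow_pos_of_pos hb0 _
    set f : ℝ → ℝ := fun x => x ^ p / p - b * x with hf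
    have hderiv : ∀ x : ℝ, HasDerivAt f (x ^ (p - 1) - b) x := by
      intro x
      have h1 : HasDerivAt (fun x : ℝ => x ^ p) (p * x ^ (p-1)) x :=
        Real.hasDerivAt_rpow_const (Or.inr hp1.le)
      have h2 := (h1.div_const p).sub ((hasDerivAt_id x).const_mul b)
      simpa [mul_div_cancel_left₀ _ hp0.ne', mul_comm] using (show HasDerivAt f _ x from h2)
    have hcp1 : c ^ (p - 1) = b := by
      rw [hc, ← Real.rpow_mul hb, mul_comm, hpq1, Real.rpow_one]
    have hcp : c ^ p = b ^ q := by
      rw [hc, ← Real.rpow_mul hb, hqp]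
    have hfc : f c = b ^ q / p - b ^ q := by
      rw [hf]
      simp only
      rw [hcp, hc]
      have : b * b ^ (q - 1) = b ^ q := by
        nth_rw 1 [← Real.rpow_one b]
        rw [← Real.rpow_add hb0]; ring_nf
      rw [this]
    have key : f c < f a := by
      rcases lt_or_gt_of_ne hne with h | h
      · -- a < c : strict anti on [0,c]
        have anti : StrictAntiOn f (Set.Icc 0 c) := by
          apply strictAntiOn_of_deriv_neg (convex_Icc 0 c)
          · exact (Continuous.continuousOn (by
              exact continuous_iff_continuousAt.mpr fun x => (hderiv x).continuousAt))
          · intro x hx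
            rw [interior_Icc] at hx
            rw [(hderiv x).deriv]
            have : x ^ (p-1) < c ^ (p-1) :=
              Real.rpow_lt_rpow hx.1.le hx.2 (by linarith)
            rw [hcp1] at this
            linarith
        exact anti ⟨ha, h.le⟩ ⟨hc0.le, le_refl c⟩ h
      · -- a > c : strict mono on [c, ∞)
        have mono : StrictMonoOn f (Set.Ici c) := by
          apply strictMonoOn_of_deriv_pos (convex_Ici c)
          · exact (Continuous.continuousOn (by
              exact continuous_iff_continuousAt.mpr fun x => (hderiv x).continuousAt))
          · intro x hx
            rw [interior_Ici] at hx
            rw [(hderiv x).deriv]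
            have : c ^ (p-1) < x ^ (p-1) :=
              Real.rpow_lt_rpow hc0.le hx (by linarith)
            rw [hcp1] at this
            linarith
        exact mono (Set.self_mem_Ici) (le_of_lt h) h
    rw [hfc, hf] at key
    simp only at key
    have hq' : b ^ q / p - b ^ q = -(b ^ q / q) := by
      field_simp
      nlinarith [Real.rpow_pos_of_pos hb0 q]
    rw [hq'] at key
    nlinarith


theorem coord_le {p q : ℝ} (hpq : Real.HolderConjugate p q) {G : ℝ} (hG : 0 < G) (a b : ℝ) :
    -(G ^ 2 * ((|a| / G) ^ q / q + (|b| / G) ^ p / p)) ≤ a * b := by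
  have hy : (|a| / G) * (|b| / G) ≤ (|a| / G) ^ q / q + (|b| / G) ^ p / p :=
    Real.young_inequality_of_nonneg (by positivity) (by positivity) hpq.symm
  have habs : |a| * |b| = G ^ 2 * ((|a| / G) * (|b| / G)) := by
    field_simp
  have h1 : -(a * b) ≤ |a| * |b| := by
    rw [← abs_mul]; exact neg_le_abs _
  have h2 : G ^ 2 * ((|a| / G) * (|b| / G)) ≤ G ^ 2 * ((|a| / G) ^ q / q + (|b| / G) ^ p / p) :=
    mul_le_mul_of_nonneg_left hy (by positivity)
  linarith

theorem coord_lt {p q : ℝ} (hpq : Real.HolderConjugate p q) {G : ℝ} (hG : 0 < G) (a b : ℝ)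
    (hne : b ≠ -(G ^ (2 - q) * Real.sign a * |a| ^ (q - 1))) :
    -(G ^ 2 * ((|a| / G) ^ q / q + (|b| / G) ^ p / p)) < a * b := by
  have hq1 : 1 < q := hpq.symm.lt
  have hp1 : 1 < p := hpq.lt
  have hpq1 : (p - 1) * (q - 1) = 1 := by
    have := hpq.inv_add_inv_eq_one; field_simp at this; nlinarith
  have habs : |a| * |b| = G ^ 2 * ((|a| / G) * (|b| / G)) := by
    field_simp
  by_cases h1 : a * b = -(|a| * |b|)
  · by_cases h2 : |a| / G = (|b| / G) ^ (p - 1)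
    · -- both equality cases: b equals the closed form, contradiction
      exfalso
      apply hne
      have hB : |b| / G = (|a| / G) ^ (q - 1) := by
        rw [h2, ← Real.rpow_mul (by positivity), hpq1, Real.rpow_one]
      have hGg : G ^ (2 - q) * G ^ q = G ^ 2 := by
        have h2q : (2 - q) + q = ((2 : ℕ) : ℝ) := by norm_num
        rw [← Real.rpow_add hG, h2q, Real.rpow_natCast]
      have hbval : |b| = G ^ (2 - q) * |a| ^ (q - 1) := by
        have hb' : |b| = G * ((|a| / G) ^ (q - 1)) := by
          rw [← hB]; field_simp
        rw [hb', Real.div_rpow (abs_nonneg a) hG.le]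
        have hGone : G ^ (2 - q) * G ^ (q - 1) = G := by
          have he : (2 - q) + (q - 1) = (1:ℝ) := by ring
          rw [← Real.rpow_add hG, he, Real.rpow_one]
        have hGq1 : (0:ℝ) < G ^ (q - 1) := Real.rpow_pos_of_pos hG _
        field_simp
        linear_combination (-(|a| ^ (q - 1))) * hGone
      rcases lt_trichotomy a 0 with ha | ha | ha
      · have hsa : Real.sign a = -1 := Real.sign_of_neg ha
        rw [abs_of_neg ha] at h1
        have hb : b = |b| :=
          mul_left_cancel₀ (ne_of_lt ha) (by linear_combination h1)
        rw [hb, hbval, hsa]; ring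
      · subst ha
        have : |b| = 0 := by
          rw [hbval]
          simp [Real.zero_rpow (by linarith : q - 1 ≠ 0)]
        rw [abs_eq_zero] at this
        rw [this]; simp
      · have hsa : Real.sign a = 1 := Real.sign_of_pos ha
        rw [abs_of_pos ha] at h1
        have hb : b = -|b| :=
          mul_left_cancel₀ (ne_of_gt ha) (by linear_combination h1)
        rw [hb, hbval, hsa]; ring
    · have hy : (|a| / G) * (|b| / G) < (|a| / G) ^ q / q + (|b| / G) ^ p / p := by
        have := young_strict hpq.symm (by positivity : (0:ℝ) ≤ |a| / G)
          (by positivity : (0:ℝ) ≤ |b| / G) h2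
        linarith
      have h2' : G ^ 2 * ((|a| / G) * (|b| / G)) <
          G ^ 2 * ((|a| / G) ^ q / q + (|b| / G) ^ p / p) :=
        mul_lt_mul_of_pos_left hy (by positivity)
      rw [h1]
      linarith
  · have h1' : -(a * b) < |a| * |b| := by
      have h0 : -(a * b) ≤ |a * b| := neg_le_abs _
      rcases h0.lt_or_eq with h | h
      · rwa [abs_mul] at h
      · exact absurd (by rw [abs_mul] at h; linarith) h1
    have hy : (|a| / G) * (|b| / G) ≤ (|a| / G) ^ q / q + (|b| / G) ^ p / p :=
      Real.young_inequality_of_nonneg (by positivity) (by positivity) hpq.symm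
    have h2 : G ^ 2 * ((|a| / G) * (|b| / G)) ≤ G ^ 2 * ((|a| / G) ^ q / q + (|b| / G) ^ p / p) :=
      mul_le_mul_of_nonneg_left hy (by positivity)
    linarith

/-- closed form of the `p`-norm proximal step: the point `w⁺` with
coordinates `w⁺_i = w_i − ‖g‖_q^{(p−q)/p}·sign(g_i)·|g_i|^{q−1}` is the unique
minimizer over `ℝ^d` of `u ↦ ⟨g, u⟩ + (1/2)‖u − w‖_p²`. -/
theorem stmt_14 {d : ℕ} (p q : ℝ) (hp1 : 1 < p) (hp2 : p ≤ 2)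
    (hpq : 1 / p + 1 / q = 1)
    (w g : EuclideanSpace ℝ (Fin d)) (hg : g ≠ 0)
    (wplus : EuclideanSpace ℝ (Fin d))
    (hplus : ∀ i : Fin d,
      wplus i = w i - pnorm q g ^ ((p - q) / p) * Real.sign (g i) * |g i| ^ (q - 1)) :
    ∀ u : EuclideanSpace ℝ (Fin d), u ≠ wplus →
      ⟪g, wplus⟫ + (1 / 2) * pnorm p (wplus - w) ^ 2
        < ⟪g, u⟫ + (1 / 2) * pnorm p (u - w) ^ 2 := by
  intro u hu
  have hp0 : (0:ℝ) < p := by linarith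
  have hpq' : Real.HolderConjugate p q := Real.holderConjugate_iff.mpr ⟨hp1, by rw [← one_div, ← one_div]; exact hpq⟩
  have hq1 : 1 < q := hpq'.symm.lt
  have hq0 : (0:ℝ) < q := by linarith
  have hsum : p + q = p * q := by field_simp at hpq; linarith
  have hqp : (q - 1) * p = q := by nlinarith
  have h2q : (p - q) / p = 2 - q := by field_simp; nlinarith
  -- basic facts about g and G
  have hsub : ∀ (x y : EuclideanSpace ℝ (Fin d)) (i : Fin d), (x - y) i = x i - y i :=
    fun _ _ _ => rfl
  obtain ⟨j0, hj0⟩ : ∃ i, g i ≠ 0 := by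
    by_contra h
    push_neg at h
    exact hg (by ext i; exact h i)
  have hSg : (0:ℝ) < ∑ i, |g i| ^ q :=
    Finset.sum_pos' (fun i _ => Real.rpow_nonneg (abs_nonneg _) q)
      ⟨j0, Finset.mem_univ _, Real.rpow_pos_of_pos (abs_pos.mpr hj0) q⟩
  obtain ⟨G, hGdef⟩ : ∃ x : ℝ, pnorm q g = x := ⟨_, rfl⟩
  simp only [hGdef] at hplus
  have hG : 0 < G := by
    rw [← hGdef, pnorm]; exact Real.rpow_pos_of_pos hSg _
  have hGq : G ^ q = ∑ i, |g i| ^ q := by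
    rw [← hGdef, pnorm, ← Real.rpow_mul hSg.le, one_div, inv_mul_cancel₀ hq0.ne', Real.rpow_one]
  obtain ⟨c, hcdef⟩ : ∃ x : ℝ, x = G ^ (2 - q) := ⟨_, rfl⟩
  have hc0 : 0 ≤ c := hcdef ▸ Real.rpow_nonneg hG.le _
  have hcG2 : c * G ^ q = G ^ (2:ℕ) := by
    have h2 : (2 - q) + q = ((2:ℕ):ℝ) := by norm_num
    rw [hcdef, ← Real.rpow_add hG, h2, Real.rpow_natCast]
  -- helpers about sign and powers
  have hsgn : ∀ x : ℝ, x * Real.sign x = |x| := by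
    intro x
    rcases lt_trichotomy x 0 with h | h | h
    · rw [Real.sign_of_neg h, abs_of_neg h]; ring
    · simp [h]
    · rw [Real.sign_of_pos h, abs_of_pos h]; ring
  have habsq : ∀ x : ℝ, |x| * |x| ^ (q - 1) = |x| ^ q := by
    intro x
    rcases eq_or_ne x 0 with h | h
    · simp [h, Real.zero_rpow hq0.ne', Real.zero_rpow (by linarith : q - 1 ≠ 0)]
    · nth_rw 1 [← Real.rpow_one |x|]
      rw [← Real.rpow_add (abs_pos.mpr h)]
      ring_nf
  -- inner products as sums
  have hiw : ⟪g, wplus⟫ = ∑ i, g i * wplus i := by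
    simp [PiLp.inner_apply, RCLike.inner_apply, conj_trivial, mul_comm]
  have hiu : ⟪g, u⟫ = ∑ i, g i * u i := by
    simp [PiLp.inner_apply, RCLike.inner_apply, conj_trivial, mul_comm]
  -- value at wplus
  have hterm : ∀ i, g i * wplus i = g i * w i - c * |g i| ^ q := by
    intro i
    rw [hplus i, h2q, ← hcdef]
    calc g i * (w i - c * Real.sign (g i) * |g i| ^ (q - 1))
        = g i * w i - (g i * Real.sign (g i)) * (c * |g i| ^ (q - 1)) := by ring
      _ = g i * w i - c * (|g i| * |g i| ^ (q - 1)) := by rw [hsgn]; ring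
      _ = g i * w i - c * |g i| ^ q := by rw [habsq]
  have hinner_plus : ⟪g, wplus⟫ = (∑ i, g i * w i) - G ^ (2:ℕ) := by
    rw [hiw]
    simp_rw [hterm]
    rw [Finset.sum_sub_distrib, ← Finset.mul_sum, ← hGq, hcG2]
  -- norm of wplus - w
  have habsplus : ∀ i, |(wplus - w) i| = c * |g i| ^ (q - 1) := by
    intro i
    rw [hsub]
    have h1 : wplus i - w i = -(c * Real.sign (g i) * |g i| ^ (q - 1)) := by
      rw [hplus i, h2q, ← hcdef]; ring
    rw [h1, abs_neg, abs_mul, abs_mul, abs_of_nonneg hc0,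
      abs_of_nonneg (Real.rpow_nonneg (abs_nonneg _) _)]
    rcases lt_trichotomy (g i) 0 with h | h | h
    · rw [Real.sign_of_neg h]; norm_num
    · simp [h, Real.sign_zero, Real.zero_rpow (by linarith : q - 1 ≠ 0)]
    · rw [Real.sign_of_pos h]; norm_num
  have hVplus : pnorm p (wplus - w) = G := by
    rw [pnorm]
    have hsum_plus : ∑ i, |(wplus - w) i| ^ p = G ^ p := by
      have h1 : ∀ i, |(wplus - w) i| ^ p = c ^ p * |g i| ^ q := by
        intro i
        rw [habsplus i, Real.mul_rpow hc0 (Real.rpow_nonneg (abs_nonneg _) _),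
          ← Real.rpow_mul (abs_nonneg _), hqp]
      simp_rw [h1]
      rw [← Finset.mul_sum, ← hGq, hcdef]
      have he : (2 - q) * p + q = p := by nlinarith
      rw [← Real.rpow_mul hG.le, ← Real.rpow_add hG, he]
    rw [hsum_plus, ← Real.rpow_mul hG.le, mul_one_div, div_self hp0.ne', Real.rpow_one]
  -- the candidate point u
  obtain ⟨V, hVdef⟩ : ∃ x : ℝ, pnorm p (u - w) = x := ⟨_, rfl⟩
  have hSv0 : (0:ℝ) ≤ ∑ i, |(u - w) i| ^ p :=
    Finset.sum_nonneg fun i _ => Real.rpow_nonneg (abs_nonneg _) _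
  have hV0 : 0 ≤ V := by
    rw [← hVdef, pnorm]; exact Real.rpow_nonneg hSv0 _
  have hVp : V ^ p = ∑ i, |(u - w) i| ^ p := by
    rw [← hVdef, pnorm, ← Real.rpow_mul hSv0, one_div, inv_mul_cancel₀ hp0.ne', Real.rpow_one]
  have hsplit : ∑ i, g i * u i = (∑ i, g i * w i) + ∑ i, g i * ((u - w) i) := by
    rw [← Finset.sum_add_distrib]
    refine Finset.sum_congr rfl fun i _ => ?_
    rw [hsub]; ring
  obtain ⟨T, hTdef⟩ : ∃ x : ℝ, x = ∑ i, g i * ((u - w) i) := ⟨_, rfl⟩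
  have key : 0 < T + (1/2) * V ^ (2:ℕ) + (1/2) * G ^ (2:ℕ) := by
    rcases eq_or_ne V G with hVG | hVG
    · -- case V = G : coordinatewise Young with at least one strict coordinate
      obtain ⟨j, hj⟩ : ∃ i, u i ≠ wplus i := by
        by_contra h; push_neg at h; exact hu (by ext i; exact h i)
      have hjne : (u - w) j ≠ -(G ^ (2 - q) * Real.sign (g j) * |g j| ^ (q - 1)) := by
        rw [hsub]
        intro h
        apply hj
        rw [hplus j, h2q]
        linarith
      have hstrict := coord_lt hpq' hG (g j) ((u - w) j) hjne
      have hle : ∀ i ∈ Finset.univ,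
          -(G ^ 2 * ((|g i| / G) ^ q / q + (|(u - w) i| / G) ^ p / p)) ≤ g i * ((u - w) i) :=
        fun i _ => coord_le hpq' hG _ _
      have hlt := Finset.sum_lt_sum hle ⟨j, Finset.mem_univ _, hstrict⟩
      have hBsum : ∑ i, -(G ^ 2 * ((|g i| / G) ^ q / q + (|(u - w) i| / G) ^ p / p))
          = -(G ^ (2:ℕ)) := by
        have hGqp : (0:ℝ) < G ^ q := Real.rpow_pos_of_pos hG _
        have hGpp : (0:ℝ) < G ^ p := Real.rpow_pos_of_pos hG _
        have h1 : ∀ i : Fin d, -(G ^ 2 * ((|g i| / G) ^ q / q + (|(u - w) i| / G) ^ p / p))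
            = -(G ^ 2 / (G ^ q * q)) * |g i| ^ q + -(G ^ 2 / (G ^ p * p)) * |(u - w) i| ^ p := by
          intro i
          rw [Real.div_rpow (abs_nonneg _) hG.le, Real.div_rpow (abs_nonneg _) hG.le]
          field_simp
          ring
        simp_rw [h1]
        rw [Finset.sum_add_distrib, ← Finset.mul_sum, ← Finset.mul_sum, ← hGq, ← hVp, hVG]
        field_simp
        linear_combination (-1 : ℝ) * hsum
      rw [hBsum] at hlt
      rw [← hTdef] at hlt
      rw [hVG]
      nlinarith [hlt]
    · -- case V ≠ G : Hölder plus strict quadratic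
      have hneg : -T = ∑ i, ((u - w) i) * (-(g i)) := by
        rw [hTdef, ← Finset.sum_neg_distrib]
        exact Finset.sum_congr rfl fun i _ => by ring
      have hH2 : ∑ i, ((u - w) i) * (-(g i)) ≤ V * G := by
        have h := Real.inner_le_Lp_mul_Lq (s := Finset.univ) (f := fun i => (u - w) i) (g := fun i => -(g i)) hpq'
        simp only [abs_neg] at h
        rw [← hVdef, ← hGdef, pnorm, pnorm]
        exact h
      have hTlb : -(V * G) ≤ T := by
        rw [← hneg] at hH2
        linarith
      have h0 : V - G ≠ 0 := sub_ne_zero.mpr hVG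
      have hsq : 0 < (V - G) ^ 2 := by positivity
      have hexp : (V - G) ^ 2 = V ^ 2 - 2 * (V * G) + G ^ 2 := by ring
      rw [hexp] at hsq
      linarith [hTlb, hsq]
  rw [hinner_plus, hiu, hsplit, hVplus, hVdef, ← hTdef]
  linarith [key]
end
end

section
/- Let θ ∈ (0,1), c > 0, α > 1, and let 0 < ε ≤ ε₀/4 with ε₀ > 0 and f(w⁰) − f_* ≤ ε₀ for some w⁰ ∈ Ω. Suppose there exists ε̂₁ with ε ≤ ε̂₁ ≤ ε₀/2 such that f admits the local error bound dist₂(w, Ω_*) ≤ c·(f(w) − f_*)^θ for all w ∈ S_{ε̂₁}. Set K = ⌈log_α(ε₀/ε)⌉, and let integers t_s satisfy t_s ≥ α²c²G²·(2^{s−1}/ε̂₁)^{2(1−θ)} for s ≥ 1. For s ≥ 1 let w^s be the output after K RSG stages started at w^{s−1} with per-stage iteration count t_s and stage step sizes η_k = ε₀^{(s)}/(α^k G²), where ε₀^{(1)} = ε₀ and ε₀^{(s)} = 4ε̂₁/2^{s−1} for s ≥ 2. Then f(w^s) − f_* ≤ 2ε̂₁/2^{s−1} for every s ≥ 1; in particular,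 for S = ⌈log₂(ε̂₁/ε)⌉ + 1, f(w^S) − f_* ≤ 2ε. -/
open RealInnerProductSpace

noncomputable section

/-- `w` is a sequence of stage outputs of the RSG method with parameters
`(w 0, α, ε₀, t)`: within stage `k`, starting from `u k 1 = w (k-1)`, `t` projected
subgradient steps with constant step size `η_k = ε₀/(α^k G²)` are performed and `w k`
is the average of the `t` iterates of stage `k`. -/
def IsRSGSeq {d : ℕ} (f : EuclideanSpace ℝ (Fin d) → ℝ)
    (Ω : Set (EuclideanSpace ℝ (Fin d))) (G ε₀ α : ℝ) (t : ℕ)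
    (w : ℕ → EuclideanSpace ℝ (Fin d)) : Prop :=
  ∃ u g : ℕ → ℕ → EuclideanSpace ℝ (Fin d),
    (∀ k, 1 ≤ k → u k 1 = w (k - 1)) ∧
    (∀ k, 1 ≤ k → ∀ i, 1 ≤ i → i ≤ t →
      IsSubgradAt f (u k i) (g k i) ∧
      u k (i + 1) ∈ Ω ∧
      ∀ z ∈ Ω, ‖u k (i + 1) - (u k i - (ε₀ / (α ^ k * G ^ 2)) • g k i)‖
        ≤ ‖z - (u k i - (ε₀ / (α ^ k * G ^ 2)) • g k i)‖) ∧
    (∀ k, 1 ≤ k → w k = (t : ℝ)⁻¹ • ∑ i ∈ Finset.Icc 1 t, u k i)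


/-- `wout` is the output of `K` RSG stages started at `winit`, with per-stage iteration
count `t` and stage step sizes `η_k = ε₀'/(α^k G²)`. -/
def RSGOutput {d : ℕ} (f : EuclideanSpace ℝ (Fin d) → ℝ)
    (Ω : Set (EuclideanSpace ℝ (Fin d))) (G ε₀' α : ℝ) (t K : ℕ)
    (winit wout : EuclideanSpace ℝ (Fin d)) : Prop :=
  ∃ w : ℕ → EuclideanSpace ℝ (Fin d),
    w 0 = winit ∧ IsRSGSeq f Ω G ε₀' α t w ∧ wout = w K


section helpers
variable {E : Type*} [NormedAddCommGroup E] [InnerProductSpace ℝ E]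

/-- Variational inequality from metric minimality over a convex set. -/
lemma vi_of_min {K : Set E} (hK : Convex ℝ K) {p v : E} (hv : v ∈ K)
    (hmin : ∀ z ∈ K, ‖p - v‖ ≤ ‖p - z‖) : ∀ z ∈ K, ⟪p - v, z - v⟫ ≤ 0 := by
  haveI : Nonempty K := ⟨⟨v, hv⟩⟩
  have h1 : ‖p - v‖ = ⨅ w : K, ‖p - w‖ := by
    refine le_antisymm (le_ciInf fun w => hmin w w.2) ?_
    have hbdd : BddBelow (Set.range fun w : K => ‖p - w‖) := by
      refine ⟨0, fun x hx => ?_⟩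
      obtain ⟨w, rfl⟩ := hx
      exact norm_nonneg _
    exact ciInf_le hbdd ⟨v, hv⟩
  exact (norm_eq_iInf_iff_real_inner_le_zero hK hv).1 h1

/-- From the variational inequality, the squared distance to any point of the set
dominates. -/
lemma norm_le_of_vi {p v y : E} (h : ⟪p - v, y - v⟫ ≤ 0) : ‖p - v‖ ≤ ‖p - y‖ := by
  have hexp : ‖p - y‖ ^ 2 = ‖p - v‖ ^ 2 - 2 * ⟪p - v, y - v⟫ + ‖y - v‖ ^ 2 := by
    have h2 := norm_sub_sq_real (p - v) (y - v)
    have h3 : (p - v) - (y - v) = p - y := by abel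
    rw [h3] at h2; exact h2
  have h4 : ‖p - v‖ ^ 2 ≤ ‖p - y‖ ^ 2 := by nlinarith [sq_nonneg ‖y - v‖]
  nlinarith [norm_nonneg (p - v), norm_nonneg (p - y)]

/-- Projection inequality: if `v ∈ K` is a nearest point of convex `K` to `p`, then
for all `z ∈ K`, `‖v - z‖² ≤ ‖p - z‖²`. -/
lemma proj_sq_le {K : Set E} (hK : Convex ℝ K) {p v : E} (hv : v ∈ K)
    (hmin : ∀ z ∈ K, ‖v - p‖ ≤ ‖z - p‖) : ∀ z ∈ K, ‖v - z‖ ^ 2 ≤ ‖p - z‖ ^ 2 := by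
  have hVI := vi_of_min (p := p) hK hv (fun z hz => by
    rw [norm_sub_rev p v, norm_sub_rev p z]; exact hmin z hz)
  intro z hz
  have hexp : ‖p - z‖ ^ 2 = ‖p - v‖ ^ 2 - 2 * ⟪p - v, z - v⟫ + ‖z - v‖ ^ 2 := by
    have h2 := norm_sub_sq_real (p - v) (z - v)
    have h3 : (p - v) - (z - v) = p - z := by abel
    rw [h3] at h2; exact h2
  have := hVI z hz
  rw [norm_sub_rev v z]
  linarith [sq_nonneg ‖p - v‖]

lemma tele (F : ℕ → ℝ) : ∀ t : ℕ, ∑ i ∈ Finset.Icc 1 t, (F i - F (i + 1)) = F 1 - F (t + 1) := by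
  intro t
  induction t with
  | zero => simp
  | succ n ih => rw [Finset.sum_Icc_succ_top (by omega), ih]; ring

end helpers

/-- One stage of projected averaged subgradient descent. -/
lemma stage_bound {d : ℕ} {f : EuclideanSpace ℝ (Fin d) → ℝ}
    {Ω : Set (EuclideanSpace ℝ (Fin d))} (hΩcvx : Convex ℝ Ω)
    (hf : ConvexOn ℝ Set.univ f) {G : ℝ} (hG : 0 < G)
    (hGbnd : ∀ z ∈ Ω, ∀ g, IsSubgradAt f z g → ‖g‖ ≤ G)
    {η : ℝ} (hη : 0 < η) {t : ℕ} (ht : 1 ≤ t)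
    {u g : ℕ → EuclideanSpace ℝ (Fin d)} (hu1 : u 1 ∈ Ω)
    (hstep : ∀ i, 1 ≤ i → i ≤ t → IsSubgradAt f (u i) (g i) ∧ u (i + 1) ∈ Ω ∧
      ∀ z ∈ Ω, ‖u (i + 1) - (u i - η • g i)‖ ≤ ‖z - (u i - η • g i)‖) :
    ((t : ℝ)⁻¹ • ∑ i ∈ Finset.Icc 1 t, u i) ∈ Ω ∧
      ∀ z ∈ Ω, f ((t : ℝ)⁻¹ • ∑ i ∈ Finset.Icc 1 t, u i) - f z
        ≤ η * G ^ 2 / 2 + ‖u 1 - z‖ ^ 2 / (2 * η * t) := by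
  have ht0 : (0 : ℝ) < t := by exact_mod_cast Nat.lt_of_lt_of_le Nat.zero_lt_one ht
  have humem : ∀ i, 1 ≤ i → i ≤ t → u i ∈ Ω := by
    intro i
    induction i with
    | zero => omega
    | succ n ih =>
      intro _ hle
      rcases Nat.eq_zero_or_pos n with hn | hn
      · subst hn; exact hu1
      · exact (hstep n hn (by omega)).2.1
  have hcard : (Finset.Icc 1 t).card = t := by rw [Nat.card_Icc]; omega
  have hwsum : ∑ _i ∈ Finset.Icc 1 t, (t : ℝ)⁻¹ = 1 := by
    rw [Finset.sum_const, hcard, nsmul_eq_mul, mul_inv_cancel₀ (ne_of_gt ht0)]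
  have havg_eq : (t : ℝ)⁻¹ • ∑ i ∈ Finset.Icc 1 t, u i
      = ∑ i ∈ Finset.Icc 1 t, (t : ℝ)⁻¹ • u i := Finset.smul_sum
  have hmemavg : ((t : ℝ)⁻¹ • ∑ i ∈ Finset.Icc 1 t, u i) ∈ Ω := by
    rw [havg_eq]
    exact hΩcvx.sum_mem (fun i _ => inv_nonneg.2 ht0.le) hwsum
      (fun i hi => humem i (Finset.mem_Icc.1 hi).1 (Finset.mem_Icc.1 hi).2)
  refine ⟨hmemavg, fun z hz => ?_⟩
  -- per-iteration bound
  have step : ∀ i, 1 ≤ i → i ≤ t →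
      f (u i) - f z ≤ (‖u i - z‖ ^ 2 - ‖u (i + 1) - z‖ ^ 2 + η ^ 2 * G ^ 2) / (2 * η) := by
    intro i h1 h2
    obtain ⟨hsg, hmem', hproj⟩ := hstep i h1 h2
    have hgb : ‖g i‖ ≤ G := hGbnd _ (humem i h1 h2) _ hsg
    have hsub : f (u i) - f z ≤ ⟪g i, u i - z⟫ := by
      have h3 := hsg z
      have h4 : ⟪g i, z - u i⟫ = -⟪g i, u i - z⟫ := by
        rw [← inner_neg_right]; congr 1; abel
      rw [h4] at h3; linarith
    have hproj2 : ‖u (i + 1) - z‖ ^ 2 ≤ ‖(u i - η • g i) - z‖ ^ 2 :=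
      proj_sq_le hΩcvx hmem' hproj z hz
    have hexp : ‖(u i - η • g i) - z‖ ^ 2
        = ‖u i - z‖ ^ 2 - 2 * η * ⟪g i, u i - z⟫ + η ^ 2 * ‖g i‖ ^ 2 := by
      have h5 : (u i - η • g i) - z = (u i - z) - η • g i := by abel
      rw [h5, norm_sub_sq_real, real_inner_smul_right, norm_smul, real_inner_comm,
        Real.norm_eq_abs, abs_of_pos hη, mul_pow]
      ring
    have hg2 : ‖g i‖ ^ 2 ≤ G ^ 2 := by nlinarith [norm_nonneg (g i)]
    rw [le_div_iff₀ (by positivity)]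
    nlinarith [hproj2, hexp]
  have hsum := Finset.sum_le_sum (fun i hi =>
    step i (Finset.mem_Icc.1 hi).1 (Finset.mem_Icc.1 hi).2)
  have htel : ∑ i ∈ Finset.Icc 1 t,
      (‖u i - z‖ ^ 2 - ‖u (i + 1) - z‖ ^ 2 + η ^ 2 * G ^ 2) / (2 * η)
      = (‖u 1 - z‖ ^ 2 - ‖u (t + 1) - z‖ ^ 2) / (2 * η) + t * (η ^ 2 * G ^ 2) / (2 * η) := by
    rw [← Finset.sum_div]
    rw [Finset.sum_add_distrib, tele (fun i => ‖u i - z‖ ^ 2) t, Finset.sum_const, hcard,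
      nsmul_eq_mul]
    ring
  have jensen : f ((t : ℝ)⁻¹ • ∑ i ∈ Finset.Icc 1 t, u i)
      ≤ ∑ i ∈ Finset.Icc 1 t, (t : ℝ)⁻¹ * f (u i) := by
    rw [havg_eq]
    exact hf.map_sum_le (fun i _ => inv_nonneg.2 ht0.le) hwsum (fun i _ => Set.mem_univ _)
  have hsumfz : ∑ i ∈ Finset.Icc 1 t, (f (u i) - f z)
      = (∑ i ∈ Finset.Icc 1 t, f (u i)) - t * f z := by
    rw [Finset.sum_sub_distrib, Finset.sum_const, hcard, nsmul_eq_mul]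
  have hjen2 : f ((t : ℝ)⁻¹ • ∑ i ∈ Finset.Icc 1 t, u i)
      ≤ (t : ℝ)⁻¹ * ∑ i ∈ Finset.Icc 1 t, f (u i) := by
    rw [Finset.mul_sum]; exact jensen
  have h6 : (∑ i ∈ Finset.Icc 1 t, f (u i)) - t * f z
      ≤ ‖u 1 - z‖ ^ 2 / (2 * η) + t * (η ^ 2 * G ^ 2) / (2 * η) := by
    rw [← hsumfz]
    have hdrop : (‖u 1 - z‖ ^ 2 - ‖u (t + 1) - z‖ ^ 2) / (2 * η) ≤ ‖u 1 - z‖ ^ 2 / (2 * η) := by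
      gcongr
      nlinarith [sq_nonneg ‖u (t + 1) - z‖]
    linarith
  have h7 := mul_le_mul_of_nonneg_left h6 (inv_nonneg.2 ht0.le)
  have h8 : (t : ℝ)⁻¹ * ((∑ i ∈ Finset.Icc 1 t, f (u i)) - t * f z)
      = (t : ℝ)⁻¹ * (∑ i ∈ Finset.Icc 1 t, f (u i)) - f z := by
    field_simp
  have heq : (t : ℝ)⁻¹ * (‖u 1 - z‖ ^ 2 / (2 * η) + t * (η ^ 2 * G ^ 2) / (2 * η))
      = η * G ^ 2 / 2 + ‖u 1 - z‖ ^ 2 / (2 * η * t) := by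
    field_simp
    ring
  linarith

/-- Existence of a nearby point in the `ε'`-sublevel set, via the local error bound. -/
lemma dec_exists {d : ℕ} {f : EuclideanSpace ℝ (Fin d) → ℝ}
    {Ω : Set (EuclideanSpace ℝ (Fin d))} (hΩcvx : Convex ℝ Ω)
    (hf : ConvexOn ℝ Set.univ f) {fstar : ℝ} (hmin : ∀ z ∈ Ω, fstar ≤ f z)
    (hOs_ne : {z ∈ Ω | f z = fstar}.Nonempty)
    (hOs_cvx : Convex ℝ {z ∈ Ω | f z = fstar})
    (hOs_cpt : IsCompact {z ∈ Ω | f z = fstar})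
    {c θ εhat : ℝ} (hc : 0 < c) (hθ0 : 0 < θ)
    (hEB : ∀ z ∈ {z ∈ Ω | f z ≤ fstar + εhat},
      Metric.infDist z {z ∈ Ω | f z = fstar} ≤ c * (f z - fstar) ^ θ)
    {ε' : ℝ} (hε'0 : 0 < ε') (hε'hat : ε' ≤ εhat) :
    ∀ w ∈ Ω, ε' ≤ f w - fstar → ∃ w' ∈ Ω, f w' ≤ fstar + ε' ∧
      ‖w - w'‖ ≤ (c * ε' ^ θ) * ((f w - fstar - ε') / ε') := by
  intro w hw hfw
  set S := {z ∈ Ω | f z = fstar} with hS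
  obtain ⟨ws, hwsS, hdist⟩ := hOs_cpt.exists_infDist_eq_dist hOs_ne w
  have hminS : ∀ y ∈ S, ‖w - ws‖ ≤ ‖w - y‖ := by
    intro y hy
    have h1 := Metric.infDist_le_dist_of_mem (x := w) hy
    rw [hdist] at h1
    simpa [dist_eq_norm] using h1
  have hVI : ∀ y ∈ S, ⟪w - ws, y - ws⟫ ≤ 0 := vi_of_min hOs_cvx hwsS hminS
  have hΔ : 0 < f w - fstar := lt_of_lt_of_le hε'0 hfw
  set lam := ε' / (f w - fstar) with hlam
  have hlam0 : 0 < lam := by positivity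
  have hlam1 : lam ≤ 1 := by rw [hlam, div_le_one hΔ]; exact hfw
  set w' := ws + lam • (w - ws) with hw'
  have hcomb : w' = (1 - lam) • ws + lam • w := by rw [hw']; module
  have hw'Ω : w' ∈ Ω := by
    rw [hcomb]
    exact hΩcvx hwsS.1 hw (by linarith) hlam0.le (by ring)
  have hlamΔ : lam * (f w - fstar) = ε' := by
    rw [hlam]; field_simp
  have hfw' : f w' ≤ fstar + ε' := by
    have h2 := hf.2 (Set.mem_univ ws) (Set.mem_univ w) (by linarith : (0:ℝ) ≤ 1 - lam)
      hlam0.le (by ring : (1 - lam) + lam = 1)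
    rw [← hcomb] at h2
    have hfws : f ws = fstar := hwsS.2
    have : (1 - lam) • f ws + lam • f w = fstar + ε' := by
      rw [hfws, smul_eq_mul, smul_eq_mul]; nlinarith [hlamΔ]
    linarith [h2, this.le, this.ge]
  have hw'sub : w' - ws = lam • (w - ws) := by rw [hw']; abel
  have hwsub : w - w' = (1 - lam) • (w - ws) := by rw [hw']; module
  have hproj' : ∀ y ∈ S, ‖w' - ws‖ ≤ ‖w' - y‖ := by
    intro y hy
    apply norm_le_of_vi
    rw [hw'sub, real_inner_smul_left]
    exact mul_nonpos_of_nonneg_of_nonpos hlam0.le (hVI y hy)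
  have h1 : ‖w' - ws‖ ≤ Metric.infDist w' S := by
    haveI : Nonempty S := hOs_ne.to_subtype
    rw [Metric.infDist_eq_iInf]
    refine le_ciInf fun y => ?_
    rw [dist_eq_norm]
    exact hproj' y y.2
  have hEBw' : Metric.infDist w' S ≤ c * (f w' - fstar) ^ θ :=
    hEB w' ⟨hw'Ω, by linarith⟩
  have h2 : c * (f w' - fstar) ^ θ ≤ c * ε' ^ θ := by
    apply mul_le_mul_of_nonneg_left _ hc.le
    exact Real.rpow_le_rpow (by linarith [hmin w' hw'Ω]) (by linarith) hθ0.le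
  have hkey : lam * ‖w - ws‖ ≤ c * ε' ^ θ := by
    have h3 : ‖w' - ws‖ = lam * ‖w - ws‖ := by
      rw [hw'sub, norm_smul, Real.norm_eq_abs, abs_of_pos hlam0]
    linarith
  refine ⟨w', hw'Ω, hfw', ?_⟩
  have h4 : ‖w - w'‖ = (1 - lam) * ‖w - ws‖ := by
    rw [hwsub, norm_smul, Real.norm_eq_abs, abs_of_nonneg (by linarith)]
  have h5 : (1 - lam) / lam = (f w - fstar - ε') / ε' := by
    rw [hlam]
    field_simp
  have h6 : ‖w - w'‖ = ((1 - lam) / lam) * (lam * ‖w - ws‖) := by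
    rw [h4]; field_simp
  rw [h6, ← h5, mul_comm (c * ε' ^ θ)]
  exact mul_le_mul_of_nonneg_left hkey (div_nonneg (by linarith) hlam0.le)

set_option maxHeartbeats 1000000 in
/-- Convergence of one call of RSG: after `k` stages the gap is at most `ε₀'/α^k + ε'`. -/
lemma rsg_bound {d : ℕ} {f : EuclideanSpace ℝ (Fin d) → ℝ}
    {Ω : Set (EuclideanSpace ℝ (Fin d))} (hΩcvx : Convex ℝ Ω)
    (hf : ConvexOn ℝ Set.univ f) {fstar : ℝ} (hmin : ∀ z ∈ Ω, fstar ≤ f z)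
    {G : ℝ} (hG : 0 < G)
    (hGbnd : ∀ z ∈ Ω, ∀ g, IsSubgradAt f z g → ‖g‖ ≤ G)
    {α : ℝ} (hα : 1 < α) {ε' B ε₀' : ℝ} (hε' : 0 < ε') (hB : 0 < B) (hε₀' : 0 < ε₀')
    (hD : ∀ w ∈ Ω, ε' ≤ f w - fstar → ∃ w' ∈ Ω, f w' ≤ fstar + ε' ∧
      ‖w - w'‖ ≤ B * ((f w - fstar - ε') / ε'))
    {t : ℕ} (htB : α ^ 2 * B ^ 2 * G ^ 2 / ε' ^ 2 ≤ (t : ℝ))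
    {w : ℕ → EuclideanSpace ℝ (Fin d)} (hw0 : w 0 ∈ Ω)
    (hinit : f (w 0) - fstar ≤ ε₀') (hseq : IsRSGSeq f Ω G ε₀' α t w) :
    ∀ k : ℕ, w k ∈ Ω ∧ f (w k) - fstar ≤ ε₀' / α ^ k + ε' := by
  have hα0 : (0 : ℝ) < α := lt_trans one_pos hα
  have hpos : (0 : ℝ) < α ^ 2 * B ^ 2 * G ^ 2 / ε' ^ 2 := by positivity
  have ht0R : (0 : ℝ) < (t : ℝ) := lt_of_lt_of_le hpos htB
  have ht1 : 1 ≤ t := by exact_mod_cast Nat.pos_of_ne_zero (by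
    intro h; rw [h] at ht0R; norm_num at ht0R)
  obtain ⟨u, g, hu1, hstep, havg⟩ := hseq
  intro k
  induction k with
  | zero =>
    refine ⟨hw0, ?_⟩
    simp only [pow_zero, div_one]
    linarith
  | succ k ih =>
    obtain ⟨hwkΩ, hwkb⟩ := ih
    have hk1 : 1 ≤ k + 1 := Nat.succ_le_succ (Nat.zero_le k)
    have hustart : u (k + 1) 1 = w k := by simpa using hu1 (k + 1) hk1
    have hη : 0 < ε₀' / (α ^ (k + 1) * G ^ 2) := by positivity
    have hstage := stage_bound hΩcvx hf hG hGbnd hη ht1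
      (hustart ▸ hwkΩ) (fun i h1 h2 => hstep (k + 1) hk1 i h1 h2)
    rw [← havg (k + 1) hk1] at hstage
    obtain ⟨hwk1Ω, hbound⟩ := hstage
    refine ⟨hwk1Ω, ?_⟩
    set η := ε₀' / (α ^ (k + 1) * G ^ 2) with hηdef
    set εk1 := ε₀' / α ^ (k + 1) with hεk1def
    have hεk1pos : 0 < εk1 := by positivity
    have hηval : η = εk1 / G ^ 2 := by rw [hηdef, hεk1def, div_div]
    have hηG2 : η * G ^ 2 / 2 = εk1 / 2 := by
      rw [hηval]; field_simp
    have hεrel : ε₀' / α ^ k = α * εk1 := by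
      rw [hεk1def, pow_succ]
      field_simp
    by_cases hcase : f (w k) - fstar ≤ ε'
    · have hb := hbound (w k) hwkΩ
      rw [hustart, sub_self, norm_zero] at hb
      norm_num at hb
      rw [hηG2] at hb
      linarith [hεk1pos]
    · push_neg at hcase
      obtain ⟨w', hw'Ω, hfw', hnw'⟩ := hD (w k) hwkΩ hcase.le
      have hbnd2 : ‖w k - w'‖ ≤ B * (α * εk1 / ε') := by
        refine le_trans hnw' (mul_le_mul_of_nonneg_left ?_ hB.le)
        gcongr
        rw [← hεrel]; linarith
      have hsq : ‖w k - w'‖ ^ 2 ≤ (B * (α * εk1 / ε')) ^ 2 :=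
        pow_le_pow_left₀ (norm_nonneg _) hbnd2 2
      have hterm : ‖w k - w'‖ ^ 2 / (2 * η * t) ≤ εk1 / 2 := by
        have hden : (0 : ℝ) < 2 * η * t := by positivity
        rw [div_le_iff₀ hden, hηval]
        have htB' : α ^ 2 * B ^ 2 * G ^ 2 ≤ t * ε' ^ 2 := by
          rw [div_le_iff₀ (by positivity : (0:ℝ) < ε' ^ 2)] at htB; linarith
        have hsq' : ‖w k - w'‖ ^ 2 * ε' ^ 2 ≤ B ^ 2 * α ^ 2 * εk1 ^ 2 := by
          have h2 : (B * (α * εk1 / ε')) ^ 2 * ε' ^ 2 = B ^ 2 * α ^ 2 * εk1 ^ 2 := by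
            field_simp
          nlinarith [hsq, sq_nonneg ε']
        have h3 : εk1 / 2 * (2 * (εk1 / G ^ 2) * t) = εk1 ^ 2 * t / G ^ 2 := by
          field_simp
        rw [h3, le_div_iff₀ (by positivity : (0:ℝ) < G ^ 2)]
        have hε2 : (0:ℝ) < ε' ^ 2 := by positivity
        nlinarith [mul_le_mul_of_nonneg_right hsq' (sq_nonneg G),
          mul_le_mul_of_nonneg_right htB' (sq_nonneg εk1), hε2]
      have hb := hbound w' hw'Ω
      rw [hustart] at hb
      rw [hηG2] at hb
      linarith [hterm, hfw']


/-- convergence of R²SG (restarted RSG) under the local error bound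
`dist₂(w, Ω_*) ≤ c·(f w − f_*)^θ` on `S_{ε̂₁}`: with `K = ⌈log_α(ε₀/ε)⌉`,
`t_s ≥ α²c²G²(2^{s−1}/ε̂₁)^{2(1−θ)}` and step-size parameters `ε₀^{(1)} = ε₀`,
`ε₀^{(s)} = 4ε̂₁/2^{s−1}` for `s ≥ 2`, one has `f(wˢ) − f_* ≤ 2ε̂₁/2^{s−1}` for all
`s ≥ 1`, and for `S = ⌈log₂(ε̂₁/ε)⌉ + 1`, `f(w^S) − f_* ≤ 2ε`. -/
theorem stmt_16 {d : ℕ} (f : EuclideanSpace ℝ (Fin d) → ℝ)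
    (Ω : Set (EuclideanSpace ℝ (Fin d)))
    (hΩne : Ω.Nonempty) (hΩcl : IsClosed Ω) (hΩcvx : Convex ℝ Ω)
    (hf : ConvexOn ℝ Set.univ f)
    (fstar : ℝ) (hmin : ∀ z ∈ Ω, fstar ≤ f z)
    (hOs_ne : {z ∈ Ω | f z = fstar}.Nonempty)
    (hOs_cvx : Convex ℝ {z ∈ Ω | f z = fstar})
    (hOs_cpt : IsCompact {z ∈ Ω | f z = fstar})
    (G : ℝ) (hG : 0 < G)
    (hGbnd : ∀ z ∈ Ω, ∀ g, IsSubgradAt f z g → ‖g‖ ≤ G)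
    (θ : ℝ) (hθ0 : 0 < θ) (hθ1 : θ < 1) (c : ℝ) (hc : 0 < c)
    (α : ℝ) (hα : 1 < α)
    (ε ε₀ : ℝ) (hε : 0 < ε) (hε₀ : 0 < ε₀) (hεsmall : ε ≤ ε₀ / 4)
    (hinit0 : ∃ w₀ ∈ Ω, f w₀ - fstar ≤ ε₀)
    (εhat : ℝ) (hεhat1 : ε ≤ εhat) (hεhat2 : εhat ≤ ε₀ / 2)
    (hEB : ∀ z ∈ {z ∈ Ω | f z ≤ fstar + εhat},
      Metric.infDist z {z ∈ Ω | f z = fstar} ≤ c * (f z - fstar) ^ θ)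
    (ts : ℕ → ℕ)
    (hts : ∀ s : ℕ, 1 ≤ s →
      α ^ 2 * c ^ 2 * G ^ 2 * ((2 : ℝ) ^ (s - 1) / εhat) ^ (2 * (1 - θ)) ≤ (ts s : ℝ))
    (e0 : ℕ → ℝ) (he0_1 : e0 1 = ε₀)
    (he0 : ∀ s : ℕ, 2 ≤ s → e0 s = 4 * εhat / 2 ^ (s - 1))
    (W : ℕ → EuclideanSpace ℝ (Fin d)) (hW0 : W 0 ∈ Ω)
    (hWinit : f (W 0) - fstar ≤ ε₀)
    (hRSG : ∀ s : ℕ, 1 ≤ s →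
      RSGOutput f Ω G (e0 s) α (ts s) (⌈Real.logb α (ε₀ / ε)⌉.toNat)
        (W (s - 1)) (W s)) :
    (∀ s : ℕ, 1 ≤ s → f (W s) - fstar ≤ 2 * εhat / 2 ^ (s - 1)) ∧
      f (W (⌈Real.logb 2 (εhat / ε)⌉.toNat + 1)) - fstar ≤ 2 * ε := by
  have hα0 : (0 : ℝ) < α := lt_trans one_pos hα
  have hεhatpos : 0 < εhat := lt_of_lt_of_le hε hεhat1
  set K := (⌈Real.logb α (ε₀ / ε)⌉.toNat) with hKdef
  have hrat : (4 : ℝ) ≤ ε₀ / ε := by rw [le_div_iff₀ hε]; linarith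
  have hαK : ε₀ / ε ≤ α ^ K := by
    have h1 : Real.logb α (ε₀ / ε) ≤ (K : ℝ) := by
      refine le_trans (Int.le_ceil _) ?_
      exact_mod_cast Int.self_le_toNat _
    calc ε₀ / ε = α ^ Real.logb α (ε₀ / ε) :=
          (Real.rpow_logb hα0 (ne_of_gt hα) (by positivity)).symm
      _ ≤ α ^ ((K : ℕ) : ℝ) := (Real.rpow_le_rpow_left_iff hα).2 h1
      _ = α ^ K := Real.rpow_natCast α K
  have hαKpos : (0 : ℝ) < α ^ K := by positivity
  have hK4 : (4 : ℝ) ≤ α ^ K := le_trans hrat hαK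
  have main : ∀ s : ℕ, W s ∈ Ω ∧ (1 ≤ s → f (W s) - fstar ≤ 2 * εhat / 2 ^ (s - 1)) := by
    intro s
    induction s with
    | zero => exact ⟨hW0, fun h => (Nat.not_succ_le_zero 0 h).elim⟩
    | succ s ih =>
      set ε' : ℝ := εhat / 2 ^ s with hε'def
      have hε'0 : 0 < ε' := by positivity
      have h2s : (1 : ℝ) ≤ 2 ^ s := one_le_pow₀ (by norm_num)
      have hε'hat : ε' ≤ εhat := by rw [hε'def]; exact div_le_self hεhatpos.le h2s
      obtain ⟨wseq, hwseq0, hwseqRSG, hwseqK⟩ := hRSG (s + 1) (by omega)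
      simp only [Nat.add_sub_cancel] at hwseq0
      have he0p : 0 < e0 (s + 1) ∧ f (W s) - fstar ≤ e0 (s + 1) ∧ e0 (s + 1) / α ^ K ≤ ε' := by
        rcases Nat.eq_zero_or_pos s with hs0 | hs1
        · subst hs0
          rw [show (0 : ℕ) + 1 = 1 from rfl, he0_1]
          have hε'eq : ε' = εhat := by rw [hε'def]; norm_num
          refine ⟨hε₀, hWinit, ?_⟩
          have h3 : ε₀ / α ^ K ≤ ε := by
            rw [div_le_iff₀ hαKpos]
            have := (div_le_iff₀ hε).1 hαK
            linarith
          rw [hε'eq]; linarith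
        · have he0s := he0 (s + 1) (by omega)
          simp only [Nat.add_sub_cancel] at he0s
          have h2pos : (0 : ℝ) < 2 ^ (s - 1) := by positivity
          have h2pow : (2 : ℝ) ^ s = 2 * 2 ^ (s - 1) := by
            rw [← pow_succ']
            congr 1
            omega
          refine ⟨by rw [he0s]; positivity, ?_, ?_⟩
          · rw [he0s, h2pow]
            calc f (W s) - fstar ≤ 2 * εhat / 2 ^ (s - 1) := ih.2 hs1
              _ = 4 * εhat / (2 * 2 ^ (s - 1)) := by
                  rw [div_eq_div_iff (by positivity) (by positivity)]; ring
          · rw [he0s, hε'def, h2pow]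
            have h41 : 4 / α ^ K ≤ 1 := by rw [div_le_one hαKpos]; exact hK4
            have heq : 4 * εhat / (2 * 2 ^ (s - 1)) / α ^ K
                = (4 / α ^ K) * (εhat / (2 * 2 ^ (s - 1))) := by ring
            rw [heq]
            calc (4 / α ^ K) * (εhat / (2 * 2 ^ (s - 1)))
                ≤ 1 * (εhat / (2 * 2 ^ (s - 1))) :=
                  mul_le_mul_of_nonneg_right h41 (by positivity)
              _ = εhat / (2 * 2 ^ (s - 1)) := one_mul _
      have hD := dec_exists hΩcvx hf hmin hOs_ne hOs_cvx hOs_cpt hc hθ0 hEB hε'0 hε'hat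
      have hBpos : 0 < c * ε' ^ θ := mul_pos hc (Real.rpow_pos_of_pos hε'0 θ)
      have htB : α ^ 2 * (c * ε' ^ θ) ^ 2 * G ^ 2 / ε' ^ 2 ≤ ((ts (s + 1) : ℕ) : ℝ) := by
        refine le_trans (le_of_eq ?_) (by simpa using hts (s + 1) (by omega))
        have h2 : (c * ε' ^ θ) ^ 2 = c ^ 2 * ε' ^ (θ * 2) := by
          rw [mul_pow, ← Real.rpow_natCast (ε' ^ θ) 2, ← Real.rpow_mul hε'0.le]
          norm_num
        have h3 : (ε' : ℝ) ^ (2 : ℕ) = ε' ^ ((2 : ℕ) : ℝ) := (Real.rpow_natCast ε' 2).symm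
        have h1 : ((2 : ℝ) ^ s / εhat) ^ (2 * (1 - θ)) = ε' ^ (θ * 2 - 2) := by
          rw [show (2 : ℝ) ^ s / εhat = ε'⁻¹ by rw [hε'def, inv_div],
            Real.inv_rpow hε'0.le, ← Real.rpow_neg hε'0.le,
            show -(2 * (1 - θ)) = θ * 2 - 2 by ring]
        have hL : α ^ 2 * (c * ε' ^ θ) ^ 2 * G ^ 2 / ε' ^ 2
            = α ^ 2 * c ^ 2 * G ^ 2 * ε' ^ (θ * 2 - 2) := by
          rw [h2, Real.rpow_sub hε'0, show ((2:ℝ)) = ((2:ℕ):ℝ) by norm_num, ← h3]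
          ring
        rw [hL, h1]
      have hw0' : wseq 0 ∈ Ω := by rw [hwseq0]; exact ih.1
      have hinit' : f (wseq 0) - fstar ≤ e0 (s + 1) := by rw [hwseq0]; exact he0p.2.1
      have hrsg := rsg_bound hΩcvx hf hmin hG hGbnd hα hε'0 hBpos he0p.1 hD htB hw0'
        hinit' hwseqRSG
      obtain ⟨hKΩ, hKb⟩ := hrsg K
      refine ⟨by rw [hwseqK]; exact hKΩ, fun _ => ?_⟩
      simp only [Nat.add_sub_cancel]
      rw [hwseqK]
      have h2e : 2 * εhat / 2 ^ s = 2 * ε' := by rw [hε'def]; ring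
      rw [h2e]
      linarith [hKb, he0p.2.2]
  refine ⟨fun s hs => (main s).2 hs, ?_⟩
  set n := (⌈Real.logb 2 (εhat / ε)⌉.toNat) with hndef
  have hb := (main (n + 1)).2 (by omega)
  simp only [Nat.add_sub_cancel] at hb
  have h2n : εhat / ε ≤ 2 ^ n := by
    have h1 : Real.logb 2 (εhat / ε) ≤ (n : ℝ) := by
      refine le_trans (Int.le_ceil _) ?_
      exact_mod_cast Int.self_le_toNat _
    calc εhat / ε = (2 : ℝ) ^ Real.logb 2 (εhat / ε) :=
          (Real.rpow_logb (by norm_num) (by norm_num) (by positivity)).symm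
      _ ≤ (2 : ℝ) ^ ((n : ℕ) : ℝ) := (Real.rpow_le_rpow_left_iff (by norm_num)).2 h1
      _ = 2 ^ n := Real.rpow_natCast 2 n
  have h2np : (0 : ℝ) < 2 ^ n := by positivity
  have hεhatle : εhat ≤ ε * 2 ^ n := by
    rw [div_le_iff₀ hε] at h2n; linarith
  have hfin : 2 * εhat / 2 ^ n ≤ 2 * ε := by
    rw [div_le_iff₀ h2np]; linarith
  linarith [hb]
end
end

section
/- Let α > 1 and let 0 < ε ≤ ε₀/4 with ε₀ > 0 and f(w⁰) − f_* ≤ ε₀ for some w⁰ ∈ Ω. Suppose there exists ε̂₁ with ε ≤ ε̂₁ ≤ ε₀/2 such that L_{ε̂₁} ≠ ∅ and dist₂(w, Ω_*) ≤ B_{ε̂₁} for all w ∈ S_{ε̂₁}. Set K = ⌈log_α(ε₀/ε)⌉, and let integers t_s satisfy t_s ≥ α²B_{ε̂₁}²G²·(2^{s−1}/ε̂₁)² for s ≥ 1. For s ≥ 1 let w^s be the output after K RSG stages started at w^{s−1} with per-stage iteration count t_s and stage step sizes η_k = ε₀^{(s)}/(α^k G²), where ε₀^{(1)} = ε₀ and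 ε₀^{(s)} = 4ε̂₁/2^{s−1} for s ≥ 2. Then f(w^s) − f_* ≤ 2ε̂₁/2^{s−1} for every s ≥ 1; in particular, for S = ⌈log₂(ε̂₁/ε)⌉ + 1, f(w^S) − f_* ≤ 2ε. -/
open RealInnerProductSpace

noncomputable section

variable {d : ℕ}


/-- Variational inequality for a minimizer of distance over a convex set. -/
lemma rsg_proj_ineq {C : Set (EuclideanSpace ℝ (Fin d))} (hC : Convex ℝ C)
    {x p : EuclideanSpace ℝ (Fin d)} (hp : p ∈ C)
    (hmin : ∀ z ∈ C, ‖p - x‖ ≤ ‖z - x‖) :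
    ∀ z ∈ C, ⟪x - p, z - p⟫ ≤ 0 := by
  intro z hz
  by_contra h
  push_neg at h
  set A : ℝ := ⟪x - p, z - p⟫ with hA
  have key : ∀ s : ℝ, 0 < s → s ≤ 1 → A ≤ s * ‖z - p‖ ^ 2 / 2 := by
    intro s hs hs1
    have hq : p + s • (z - p) ∈ C := by
      have := hC hp hz (by linarith : (0:ℝ) ≤ 1 - s) hs.le (by ring)
      convert this using 1
      module
    have h1 : ‖p - x‖ ≤ ‖p + s • (z - p) - x‖ := hmin _ hq
    have h2 : ‖p + s • (z - p) - x‖ ^ 2 = ‖p - x‖ ^ 2 - 2 * s * A + s ^ 2 * ‖z - p‖ ^ 2 := by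
      have e : p + s • (z - p) - x = (p - x) + s • (z - p) := by module
      rw [e, norm_add_sq_real, norm_smul, real_inner_smul_right]
      have : ⟪p - x, z - p⟫ = -A := by
        rw [hA, ← inner_neg_left]; congr 1; module
      rw [this]
      simp [Real.norm_eq_abs, mul_pow, sq_abs]
      ring
    nlinarith [norm_nonneg (p - x), norm_nonneg (p + s • (z - p) - x), sq_nonneg s]
  have hzp : 0 < ‖z - p‖ ^ 2 := by
    rcases eq_or_ne z p with rfl | hne
    · simp [hA] at h
    · have h0 : 0 < ‖z - p‖ := norm_sub_pos_iff.mpr hne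
      positivity
  have hs := key (min 1 (A / ‖z - p‖ ^ 2)) (lt_min one_pos (div_pos h hzp)) (min_le_left _ _)
  have : min 1 (A / ‖z - p‖ ^ 2) * ‖z - p‖ ^ 2 ≤ A := by
    calc min 1 (A / ‖z - p‖ ^ 2) * ‖z - p‖ ^ 2 ≤ (A / ‖z - p‖ ^ 2) * ‖z - p‖ ^ 2 := by
          apply mul_le_mul_of_nonneg_right (min_le_right _ _) hzp.le
      _ = A := by field_simp; exact div_self (norm_pos_iff.mpr (sub_ne_zero.mpr (by rintro rfl; simp at hzp))).ne'
  have hmp : 0 < min 1 (A / ‖z - p‖ ^ 2) * ‖z - p‖ ^ 2 := mul_pos (lt_min one_pos (div_pos h hzp)) hzp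
  linarith

/-- A distance-minimizer over a convex set is "nonexpansive": for any `z ∈ C`,
`‖p - z‖ ≤ ‖x - z‖`. -/
lemma rsg_proj_le {C : Set (EuclideanSpace ℝ (Fin d))} (hC : Convex ℝ C)
    {x p : EuclideanSpace ℝ (Fin d)} (hp : p ∈ C)
    (hmin : ∀ z ∈ C, ‖p - x‖ ≤ ‖z - x‖) :
    ∀ z ∈ C, ‖p - z‖ ≤ ‖x - z‖ := by
  intro z hz
  have h1 : ⟪x - p, z - p⟫ ≤ 0 := rsg_proj_ineq hC hp hmin z hz
  have h2 : ‖x - z‖ ^ 2 = ‖x - p‖ ^ 2 - 2 * ⟪x - p, z - p⟫ + ‖p - z‖ ^ 2 := by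
    have e : x - z = (x - p) + (p - z) := by module
    rw [e, norm_add_sq_real]
    have : ⟪x - p, p - z⟫ = -⟪x - p, z - p⟫ := by
      rw [← inner_neg_right]; congr 1; module
    rw [this]; ring
  have : ‖p - z‖ ^ 2 ≤ ‖x - z‖ ^ 2 := by nlinarith [norm_nonneg (x - p)]
  nlinarith [norm_nonneg (p - z), norm_nonneg (x - z)]

/-- Error-bound-type lemma: from any `w ∈ Ω` there is a point `z` of the sublevel set
`S_{ε'}` with `‖w - z‖ ≤ (B/ε') max(0, f w - f_* - ε')`, provided `ε' ≤ ε̂` and `B`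
bounds the distance from `S_{ε̂}` to the optimal set. -/
lemma rsg_err_bound {f : EuclideanSpace ℝ (Fin d) → ℝ} {Ω : Set (EuclideanSpace ℝ (Fin d))}
    (hΩcvx : Convex ℝ Ω) (hf : ConvexOn ℝ Set.univ f) (fstar : ℝ)
    (hmin : ∀ z ∈ Ω, fstar ≤ f z)
    (hOs_ne : ({z ∈ Ω | f z = fstar} : Set _).Nonempty)
    (hOs_cvx : Convex ℝ {z ∈ Ω | f z = fstar})
    (hOs_cpt : IsCompact {z ∈ Ω | f z = fstar})
    {εhat B : ℝ} (hB0 : 0 ≤ B)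
    (hdist : ∀ z ∈ {z ∈ Ω | f z ≤ fstar + εhat},
      Metric.infDist z {z ∈ Ω | f z = fstar} ≤ B)
    {ε' : ℝ} (hε' : 0 < ε') (hε'le : ε' ≤ εhat)
    {w : EuclideanSpace ℝ (Fin d)} (hw : w ∈ Ω) :
    ∃ z ∈ Ω, f z ≤ fstar + ε' ∧ ‖w - z‖ ≤ B / ε' * max 0 (f w - fstar - ε') := by
  set Os : Set (EuclideanSpace ℝ (Fin d)) := {z ∈ Ω | f z = fstar} with hOs
  by_cases hcase : f w ≤ fstar + ε'
  · exact ⟨w, hw, hcase, by simp; positivity⟩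
  push_neg at hcase
  -- projection of w onto the optimal set
  obtain ⟨v, hvOs, hvd⟩ := hOs_cpt.exists_infDist_eq_dist hOs_ne w
  have hvmin : ∀ z ∈ Os, ‖v - w‖ ≤ ‖z - w‖ := by
    intro z hz
    have := Metric.infDist_le_dist_of_mem (x := w) hz
    rw [hvd] at this
    simpa [dist_eq_norm, norm_sub_rev] using this
  have hvineq : ∀ z ∈ Os, ⟪w - v, z - v⟫ ≤ 0 := rsg_proj_ineq hOs_cvx hvOs hvmin
  -- continuity of f
  have hfc : Continuous f := by
    rw [← continuousOn_univ]
    exact hf.continuousOn isOpen_univ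
  -- intermediate value on the segment from v to w
  have hφc : ContinuousOn (fun θ : ℝ => f (v + θ • (w - v))) (Set.Icc 0 1) :=
    (hfc.comp (by continuity)).continuousOn
  have hv0 : f v = fstar := hvOs.2
  have hmem : fstar + ε' ∈ Set.Icc (f (v + (0:ℝ) • (w - v))) (f (v + (1:ℝ) • (w - v))) := by
    simp [hv0]
    constructor
    · linarith
    · linarith
  obtain ⟨θ, hθI, hθ⟩ := intermediate_value_Icc (by norm_num : (0:ℝ) ≤ 1) hφc hmem
  set z : EuclideanSpace ℝ (Fin d) := v + θ • (w - v) with hzdef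
  have hθ0 : 0 ≤ θ := hθI.1
  have hθ1 : θ ≤ 1 := hθI.2
  have hzΩ : z ∈ Ω := by
    have := hΩcvx hvOs.1 hw (by linarith : (0:ℝ) ≤ 1 - θ) hθ0 (by ring)
    convert this using 1
    rw [hzdef]; module
  have hfz : f z = fstar + ε' := hθ
  -- convexity along the segment: ε' ≤ θ (f w - fstar)
  have hcvx : f z ≤ (1 - θ) * f v + θ * f w := by
    have := hf.2 (Set.mem_univ v) (Set.mem_univ w)
      (by linarith : (0:ℝ) ≤ 1 - θ) hθ0 (by ring)
    have e : (1 - θ) • v + θ • w = z := by rw [hzdef]; module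
    rw [e] at this
    simpa using this
  have hθlow : ε' ≤ θ * (f w - fstar) := by
    rw [hv0] at hcvx
    nlinarith [hfz]
  have hθpos : 0 < θ := by
    have hfw : 0 < f w - fstar := by linarith
    by_contra hc
    push_neg at hc
    have : θ * (f w - fstar) ≤ 0 := mul_nonpos_of_nonpos_of_nonneg hc hfw.le
    linarith
  -- v is also a distance minimizer of z over Os
  have hzv : ∀ y ∈ Os, ‖z - v‖ ≤ ‖z - y‖ := by
    intro y hy
    have h1 : ⟪z - v, y - v⟫ ≤ 0 := by
      have : z - v = θ • (w - v) := by rw [hzdef]; module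
      rw [this, real_inner_smul_left]
      exact mul_nonpos_of_nonneg_of_nonpos hθ0 (hvineq y hy)
    have e : z - y = (z - v) + (v - y) := by module
    have h2 : ‖z - y‖ ^ 2 = ‖z - v‖ ^ 2 - 2 * ⟪z - v, y - v⟫ + ‖v - y‖ ^ 2 := by
      rw [e, norm_add_sq_real]
      have : ⟪z - v, v - y⟫ = -⟪z - v, y - v⟫ := by
        rw [← inner_neg_right]; congr 1; module
      rw [this]; ring
    nlinarith [norm_nonneg (z - y), norm_nonneg (z - v), norm_nonneg (v - y)]
  have hzB : ‖z - v‖ ≤ B := by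
    obtain ⟨y, hyOs, hyd⟩ := hOs_cpt.exists_infDist_eq_dist hOs_ne z
    have h1 : ‖z - v‖ ≤ ‖z - y‖ := hzv y hyOs
    have h2 : Metric.infDist z Os ≤ B := hdist z ⟨hzΩ, by rw [hfz]; linarith⟩
    rw [hyd, dist_eq_norm] at h2
    linarith
  -- final length computation
  have hwz : ‖w - z‖ = (1 - θ) * ‖w - v‖ := by
    have e : w - z = (1 - θ) • (w - v) := by rw [hzdef]; module
    rw [e, norm_smul, Real.norm_eq_abs, abs_of_nonneg (by linarith)]
  have hzvn : ‖z - v‖ = θ * ‖w - v‖ := by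
    have e : z - v = θ • (w - v) := by rw [hzdef]; module
    rw [e, norm_smul, Real.norm_eq_abs, abs_of_nonneg hθ0]
  refine ⟨z, hzΩ, le_of_eq hfz, ?_⟩
  have hmax : max 0 (f w - fstar - ε') = f w - fstar - ε' := by
    rw [max_eq_right]; linarith
  rw [hmax, hwz, div_mul_eq_mul_div, le_div_iff₀ hε']
  rw [hzvn] at hzB
  have hwv : 0 ≤ ‖w - v‖ := norm_nonneg _
  have key : (1 - θ) * ‖w - v‖ * ε' ≤ B * (f w - fstar - ε') := by
    have h1 : (1 - θ) * ‖w - v‖ * ε' ≤ (1 - θ) * ‖w - v‖ * (θ * (f w - fstar)) := by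
      apply mul_le_mul_of_nonneg_left hθlow
      exact mul_nonneg (by linarith) hwv
    have h2 : (1 - θ) * ‖w - v‖ * (θ * (f w - fstar)) = (θ * ‖w - v‖) * ((1 - θ) * (f w - fstar)) := by ring
    have h3 : (θ * ‖w - v‖) * ((1 - θ) * (f w - fstar)) ≤ B * ((1 - θ) * (f w - fstar)) := by
      apply mul_le_mul_of_nonneg_right hzB
      exact mul_nonneg (by linarith) (by linarith)
    have h4 : (1 - θ) * (f w - fstar) ≤ f w - fstar - ε' := by nlinarith [hθlow]
    have h5 : B * ((1 - θ) * (f w - fstar)) ≤ B * (f w - fstar - ε') := by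
      exact mul_le_mul_of_nonneg_left h4 hB0
    linarith
  linarith

/-- One stage of RSG: membership and averaged suboptimality bound. -/
lemma rsg_stage {f : EuclideanSpace ℝ (Fin d) → ℝ} {Ω : Set (EuclideanSpace ℝ (Fin d))}
    (hΩcvx : Convex ℝ Ω) (hf : ConvexOn ℝ Set.univ f)
    {G η : ℝ} (hG : 0 < G) (hη : 0 < η) {t : ℕ} (ht : 1 ≤ t)
    (u g : ℕ → EuclideanSpace ℝ (Fin d))
    (hstep : ∀ i, 1 ≤ i → i ≤ t → IsSubgradAt f (u i) (g i) ∧ u (i + 1) ∈ Ω ∧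
      ∀ z ∈ Ω, ‖u (i + 1) - (u i - η • g i)‖ ≤ ‖z - (u i - η • g i)‖)
    (hu1 : u 1 ∈ Ω)
    (hgb : ∀ i, 1 ≤ i → i ≤ t → ‖g i‖ ≤ G) :
    ((t : ℝ)⁻¹ • ∑ i ∈ Finset.Icc 1 t, u i) ∈ Ω ∧
    ∀ z ∈ Ω, f ((t : ℝ)⁻¹ • ∑ i ∈ Finset.Icc 1 t, u i) - f z
      ≤ η * G ^ 2 / 2 + ‖u 1 - z‖ ^ 2 / (2 * η * t) := by
  have ht0 : (0 : ℝ) < t := by exact_mod_cast ht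
  -- all iterates are in Ω
  have humem : ∀ i, 1 ≤ i → i ≤ t + 1 → u i ∈ Ω := by
    intro i hi1
    induction i with
    | zero => omega
    | succ j ih =>
      intro hle
      rcases Nat.eq_or_lt_of_le hi1 with h1 | h1
      · rw [← h1]; exact hu1
      · exact (hstep j (by omega) (by omega)).2.1
  have hmemΩ : ((t : ℝ)⁻¹ • ∑ i ∈ Finset.Icc 1 t, u i) ∈ Ω := by
    rw [Finset.smul_sum]
    apply hΩcvx.sum_mem (fun i _ => by positivity)
    · rw [Finset.sum_const, Nat.card_Icc]
      simp
      field_simp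
    · intro i hi
      simp only [Finset.mem_Icc] at hi
      exact humem i hi.1 (by omega)
  refine ⟨hmemΩ, fun z hz => ?_⟩
  -- per-step inequality
  have hkey : ∀ i, 1 ≤ i → i ≤ t →
      f (u i) - f z ≤ (‖u i - z‖ ^ 2 - ‖u (i + 1) - z‖ ^ 2) / (2 * η) + η * G ^ 2 / 2 := by
    intro i hi1 hit
    obtain ⟨hsg, humem', hproj⟩ := hstep i hi1 hit
    set x : EuclideanSpace ℝ (Fin d) := u i - η • g i with hx
    have hle : ‖u (i + 1) - z‖ ≤ ‖x - z‖ := by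
      have hm : ∀ y ∈ Ω, ‖u (i + 1) - x‖ ≤ ‖y - x‖ := hproj
      exact rsg_proj_le hΩcvx humem' hm z hz
    have hxz : ‖x - z‖ ^ 2 = ‖u i - z‖ ^ 2 - 2 * η * ⟪g i, u i - z⟫ + η ^ 2 * ‖g i‖ ^ 2 := by
      have e : x - z = (u i - z) + (-η) • g i := by rw [hx]; module
      rw [e, norm_add_sq_real, norm_smul, real_inner_smul_right]
      have : ⟪u i - z, g i⟫ = ⟪g i, u i - z⟫ := real_inner_comm _ _
      rw [this]
      simp [Real.norm_eq_abs, mul_pow, sq_abs]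
      ring
    have hsub : f (u i) - f z ≤ ⟪g i, u i - z⟫ := by
      have := hsg z
      have e : ⟪g i, z - u i⟫ = -⟪g i, u i - z⟫ := by
        rw [← inner_neg_right]; congr 1; module
      rw [e] at this
      linarith
    have hg2 : ‖g i‖ ^ 2 ≤ G ^ 2 := by
      have := hgb i hi1 hit
      nlinarith [norm_nonneg (g i)]
    have hsq : ‖u (i + 1) - z‖ ^ 2 ≤ ‖x - z‖ ^ 2 := by
      nlinarith [norm_nonneg (u (i + 1) - z), norm_nonneg (x - z)]
    rw [hxz] at hsq
    rw [div_add' _ _ _ (by positivity), ge_iff_le.symm]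
    rw [ge_iff_le, le_div_iff₀ (by positivity)]
    nlinarith [hsub, hg2, sq_nonneg η]
  -- telescoping sum
  have htel : ∑ i ∈ Finset.Icc 1 t, (‖u i - z‖ ^ 2 - ‖u (i + 1) - z‖ ^ 2)
      = ‖u 1 - z‖ ^ 2 - ‖u (t + 1) - z‖ ^ 2 := by
    rw [← Finset.Ico_add_one_right_eq_Icc, Finset.sum_Ico_eq_sum_range]
    have e : ∀ i : ℕ, 1 + i = i + 1 := fun i => by omega
    have := Finset.sum_range_sub' (fun i => ‖u (1 + i) - z‖ ^ 2) t
    simp only [e, zero_add, Nat.add_sub_cancel] at this ⊢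
    exact this
  have hsum : ∑ i ∈ Finset.Icc 1 t, (f (u i) - f z)
      ≤ ‖u 1 - z‖ ^ 2 / (2 * η) + t * (η * G ^ 2 / 2) := by
    calc ∑ i ∈ Finset.Icc 1 t, (f (u i) - f z)
        ≤ ∑ i ∈ Finset.Icc 1 t,
            ((‖u i - z‖ ^ 2 - ‖u (i + 1) - z‖ ^ 2) / (2 * η) + η * G ^ 2 / 2) := by
          apply Finset.sum_le_sum
          intro i hi
          simp only [Finset.mem_Icc] at hi
          exact hkey i hi.1 hi.2
      _ = (∑ i ∈ Finset.Icc 1 t, (‖u i - z‖ ^ 2 - ‖u (i + 1) - z‖ ^ 2)) / (2 * η)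
            + t * (η * G ^ 2 / 2) := by
          rw [Finset.sum_add_distrib, Finset.sum_const, Nat.card_Icc, Finset.sum_div]
          simp [nsmul_eq_mul]
      _ ≤ ‖u 1 - z‖ ^ 2 / (2 * η) + t * (η * G ^ 2 / 2) := by
          rw [htel]
          have h1 : 0 ≤ ‖u (t + 1) - z‖ ^ 2 := by positivity
          have : (‖u 1 - z‖ ^ 2 - ‖u (t + 1) - z‖ ^ 2) / (2 * η) ≤ ‖u 1 - z‖ ^ 2 / (2 * η) := by
            apply div_le_div_of_nonneg_right _ (by positivity)
            linarith
          linarith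
  -- Jensen
  have hjen : f ((t : ℝ)⁻¹ • ∑ i ∈ Finset.Icc 1 t, u i)
      ≤ (t : ℝ)⁻¹ * ∑ i ∈ Finset.Icc 1 t, f (u i) := by
    have h := hf.map_sum_le (t := Finset.Icc 1 t) (w := fun _ => (t : ℝ)⁻¹)
      (p := u) (fun i _ => by positivity)
      (by rw [Finset.sum_const, Nat.card_Icc]; simp; field_simp)
      (fun i _ => Set.mem_univ _)
    rw [Finset.smul_sum]
    calc f (∑ i ∈ Finset.Icc 1 t, (t : ℝ)⁻¹ • u i)
        ≤ ∑ i ∈ Finset.Icc 1 t, (t : ℝ)⁻¹ • f (u i) := h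
      _ = (t : ℝ)⁻¹ * ∑ i ∈ Finset.Icc 1 t, f (u i) := by
          rw [Finset.mul_sum]; simp [smul_eq_mul]
  -- put everything together
  have hexp : ∑ i ∈ Finset.Icc 1 t, (f (u i) - f z)
      = (∑ i ∈ Finset.Icc 1 t, f (u i)) - t * f z := by
    rw [Finset.sum_sub_distrib, Finset.sum_const, Nat.card_Icc]
    simp [nsmul_eq_mul]
  rw [hexp] at hsum
  have : (t : ℝ)⁻¹ * ∑ i ∈ Finset.Icc 1 t, f (u i)
      ≤ (t : ℝ)⁻¹ * (‖u 1 - z‖ ^ 2 / (2 * η) + t * (η * G ^ 2 / 2) + t * f z) := by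
    apply mul_le_mul_of_nonneg_left _ (by positivity)
    linarith
  have hr : (t : ℝ)⁻¹ * (‖u 1 - z‖ ^ 2 / (2 * η) + t * (η * G ^ 2 / 2) + t * f z)
      = ‖u 1 - z‖ ^ 2 / (2 * η * t) + η * G ^ 2 / 2 + f z := by
    field_simp
  rw [hr] at this
  linarith


lemma rsg_ceil_pow {b x : ℝ} (hb : 1 < b) (hx : 0 < x) :
    x ≤ b ^ (⌈Real.logb b x⌉.toNat) := by
  have hb0 : (0 : ℝ) < b := by linarith
  have h1 : Real.logb b x ≤ ((⌈Real.logb b x⌉.toNat : ℕ) : ℝ) := by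
    refine le_trans (Int.le_ceil _) ?_
    exact_mod_cast Int.self_le_toNat _
  calc x = b ^ Real.logb b x := (Real.rpow_logb hb0 hb.ne' hx).symm
    _ ≤ b ^ ((⌈Real.logb b x⌉.toNat : ℕ) : ℝ) :=
        Real.rpow_le_rpow_of_exponent_le hb.le h1
    _ = b ^ (⌈Real.logb b x⌉.toNat) := Real.rpow_natCast _ _

/-- One run of RSG (several stages with geometrically decreasing step sizes). -/
lemma rsg_run {f : EuclideanSpace ℝ (Fin d) → ℝ} {Ω : Set (EuclideanSpace ℝ (Fin d))}
    (hΩcvx : Convex ℝ Ω) (hf : ConvexOn ℝ Set.univ f)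
    (fstar : ℝ) (hmin : ∀ z ∈ Ω, fstar ≤ f z)
    (hOs_ne : ({z ∈ Ω | f z = fstar} : Set _).Nonempty)
    (hOs_cvx : Convex ℝ {z ∈ Ω | f z = fstar})
    (hOs_cpt : IsCompact {z ∈ Ω | f z = fstar})
    {G : ℝ} (hG : 0 < G)
    (hGbnd : ∀ z ∈ Ω, ∀ g, IsSubgradAt f z g → ‖g‖ ≤ G)
    {α : ℝ} (hα : 1 < α)
    {εhat B : ℝ} (hB0 : 0 ≤ B)
    (hdist : ∀ z ∈ {z ∈ Ω | f z ≤ fstar + εhat},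
      Metric.infDist z {z ∈ Ω | f z = fstar} ≤ B)
    {ε' : ℝ} (hε' : 0 < ε') (hε'le : ε' ≤ εhat)
    {ε₀' : ℝ} (hε₀' : 0 < ε₀')
    {t K : ℕ} (ht : 1 ≤ t) (htbig : α ^ 2 * B ^ 2 * G ^ 2 ≤ ε' ^ 2 * t)
    {winit wout : EuclideanSpace ℝ (Fin d)} (hwinit : winit ∈ Ω)
    (hinit : f winit - fstar ≤ ε₀')
    (hout : RSGOutput f Ω G ε₀' α t K winit wout) :
    wout ∈ Ω ∧ f wout - fstar ≤ ε' + ε₀' / α ^ K := by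
  obtain ⟨w, hw0, ⟨u, g, hu1, hsteps, havg⟩, hwK⟩ := hout
  have hα0 : (0 : ℝ) < α := by linarith
  have claim : ∀ k : ℕ, w k ∈ Ω ∧ f (w k) - fstar ≤ ε' + ε₀' / α ^ k := by
    intro k
    induction k with
    | zero =>
      rw [hw0]
      simp only [pow_zero, div_one]
      exact ⟨hwinit, by linarith⟩
    | succ k ih =>
      obtain ⟨hkΩ, hkf⟩ := ih
      set P : ℝ := α ^ k with hPdef
      have hP : 0 < P := by positivity
      have hu1' : u (k + 1) 1 = w k := by
        have := hu1 (k + 1) (by omega)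
        simpa using this
      set η : ℝ := ε₀' / (α ^ (k + 1) * G ^ 2) with hηdef
      have hη : 0 < η := by positivity
      have hstepk := hsteps (k + 1) (by omega)
      have humem : ∀ i, 1 ≤ i → i ≤ t + 1 → u (k + 1) i ∈ Ω := by
        intro i hi1
        induction i with
        | zero => omega
        | succ j ihm =>
          intro hle
          rcases Nat.eq_or_lt_of_le hi1 with h1 | h1
          · rw [← h1, hu1']; exact hkΩ
          · exact (hstepk j (by omega) (by omega)).2.1
      have hgb : ∀ i, 1 ≤ i → i ≤ t → ‖g (k + 1) i‖ ≤ G := fun i h1 h2 =>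
        hGbnd _ (humem i h1 (by omega)) _ (hstepk i h1 h2).1
      obtain ⟨havgΩ, hbnd⟩ := rsg_stage hΩcvx hf hG hη ht (u (k + 1)) (g (k + 1))
        (fun i h1 h2 => hstepk i h1 h2) (by rw [hu1']; exact hkΩ) hgb
      have hwk1 : w (k + 1) = (t : ℝ)⁻¹ • ∑ i ∈ Finset.Icc 1 t, u (k + 1) i :=
        havg (k + 1) (by omega)
      rw [← hwk1] at havgΩ hbnd
      refine ⟨havgΩ, ?_⟩
      -- target point from the error bound
      obtain ⟨z, hzΩ, hzf, hzd⟩ := rsg_err_bound hΩcvx hf fstar hmin hOs_ne hOs_cvx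
        hOs_cpt hB0 hdist hε' hε'le hkΩ
      have hbz := hbnd z hzΩ
      rw [hu1'] at hbz
      have hmaxle : max 0 (f (w k) - fstar - ε') ≤ ε₀' / P := by
        apply max_le (by positivity)
        linarith
      have hD : ‖w k - z‖ ≤ B / ε' * (ε₀' / P) := by
        calc ‖w k - z‖ ≤ B / ε' * max 0 (f (w k) - fstar - ε') := hzd
          _ ≤ B / ε' * (ε₀' / P) := by
              apply mul_le_mul_of_nonneg_left hmaxle (by positivity)
      have ht0 : (0 : ℝ) < t := by exact_mod_cast ht
      have hηG : η * G ^ 2 / 2 = ε₀' / (2 * (P * α)) := by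
        rw [hηdef, pow_succ]
        field_simp
        ring
      have hDsq : ‖w k - z‖ ^ 2 / (2 * η * t) ≤ (B / ε' * (ε₀' / P)) ^ 2 / (2 * η * t) := by
        gcongr
      have hcomp : (B / ε' * (ε₀' / P)) ^ 2 / (2 * η * t)
          = B ^ 2 * G ^ 2 * α * ε₀' / (2 * ε' ^ 2 * P * t) := by
        rw [hηdef, pow_succ]
        field_simp
        ring
      have hterm : B ^ 2 * G ^ 2 * α * ε₀' / (2 * ε' ^ 2 * P * t) ≤ ε₀' / (2 * (P * α)) := by
        rw [div_le_div_iff₀ (by positivity) (by positivity)]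
        nlinarith [mul_le_mul_of_nonneg_left htbig
          (by positivity : (0 : ℝ) ≤ 2 * P * ε₀'), hP.le, hε₀'.le]
      have hfz : f z - fstar ≤ ε' := by linarith
      have hpow : α ^ (k + 1) = P * α := by rw [pow_succ]
      rw [hpow]
      have : f (w (k + 1)) - f z ≤ ε₀' / (2 * (P * α)) + ε₀' / (2 * (P * α)) := by
        calc f (w (k + 1)) - f z ≤ η * G ^ 2 / 2 + ‖w k - z‖ ^ 2 / (2 * η * t) := hbz
          _ ≤ ε₀' / (2 * (P * α)) + ε₀' / (2 * (P * α)) := by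
              rw [hηG]
              have := hcomp ▸ hDsq
              linarith [hterm, this]
      have he : ε₀' / (2 * (P * α)) + ε₀' / (2 * (P * α)) = ε₀' / (P * α) := by
        field_simp
        ring
      rw [he] at this
      linarith
  rw [hwK]
  exact claim K

/-- convergence of R²SG (restarted RSG) without knowing `θ` and `c`,
using `B_{ε̂₁}` (the maximum distance of `L_{ε̂₁}` to `Ω_*`, which bounds
`dist₂(·, Ω_*)` on `S_{ε̂₁}`): with `K = ⌈log_α(ε₀/ε)⌉`,
`t_s ≥ α²B_{ε̂₁}²G²(2^{s−1}/ε̂₁)²` and step-size parameters `ε₀^{(1)} = ε₀`,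
`ε₀^{(s)} = 4ε̂₁/2^{s−1}` for `s ≥ 2`, one has `f(wˢ) − f_* ≤ 2ε̂₁/2^{s−1}` for all
`s ≥ 1`, and for `S = ⌈log₂(ε̂₁/ε)⌉ + 1`, `f(w^S) − f_* ≤ 2ε`. -/
theorem stmt_17 {d : ℕ} (f : EuclideanSpace ℝ (Fin d) → ℝ)
    (Ω : Set (EuclideanSpace ℝ (Fin d)))
    (hΩne : Ω.Nonempty) (hΩcl : IsClosed Ω) (hΩcvx : Convex ℝ Ω)
    (hf : ConvexOn ℝ Set.univ f)
    (fstar : ℝ) (hmin : ∀ z ∈ Ω, fstar ≤ f z)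
    (hOs_ne : {z ∈ Ω | f z = fstar}.Nonempty)
    (hOs_cvx : Convex ℝ {z ∈ Ω | f z = fstar})
    (hOs_cpt : IsCompact {z ∈ Ω | f z = fstar})
    (G : ℝ) (hG : 0 < G)
    (hGbnd : ∀ z ∈ Ω, ∀ g, IsSubgradAt f z g → ‖g‖ ≤ G)
    (α : ℝ) (hα : 1 < α)
    (ε ε₀ : ℝ) (hε : 0 < ε) (hε₀ : 0 < ε₀) (hεsmall : ε ≤ ε₀ / 4)
    (hinit0 : ∃ w₀ ∈ Ω, f w₀ - fstar ≤ ε₀)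
    (εhat : ℝ) (hεhat1 : ε ≤ εhat) (hεhat2 : εhat ≤ ε₀ / 2)
    (hLne : {z ∈ Ω | f z = fstar + εhat}.Nonempty)
    (B : ℝ)
    (hB : IsGreatest ((fun z => Metric.infDist z {z ∈ Ω | f z = fstar}) ''
      {z ∈ Ω | f z = fstar + εhat}) B)
    (hdist : ∀ z ∈ {z ∈ Ω | f z ≤ fstar + εhat},
      Metric.infDist z {z ∈ Ω | f z = fstar} ≤ B)
    (ts : ℕ → ℕ)
    (hts : ∀ s : ℕ, 1 ≤ s →
      α ^ 2 * B ^ 2 * G ^ 2 * ((2 : ℝ) ^ (s - 1) / εhat) ^ 2 ≤ (ts s : ℝ))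
    (e0 : ℕ → ℝ) (he0_1 : e0 1 = ε₀)
    (he0 : ∀ s : ℕ, 2 ≤ s → e0 s = 4 * εhat / 2 ^ (s - 1))
    (W : ℕ → EuclideanSpace ℝ (Fin d)) (hW0 : W 0 ∈ Ω)
    (hWinit : f (W 0) - fstar ≤ ε₀)
    (hRSG : ∀ s : ℕ, 1 ≤ s →
      RSGOutput f Ω G (e0 s) α (ts s) (⌈Real.logb α (ε₀ / ε)⌉.toNat)
        (W (s - 1)) (W s)) :
    (∀ s : ℕ, 1 ≤ s → f (W s) - fstar ≤ 2 * εhat / 2 ^ (s - 1)) ∧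
      f (W (⌈Real.logb 2 (εhat / ε)⌉.toNat + 1)) - fstar ≤ 2 * ε := by

  set Os : Set (EuclideanSpace ℝ (Fin d)) := {z ∈ Ω | f z = fstar} with hOsdef
  have hα0 : (0 : ℝ) < α := by linarith
  have hεhat0 : 0 < εhat := lt_of_lt_of_le hε hεhat1
  -- B is nonnegative and positive
  obtain ⟨z1, hz1L, hz1B0⟩ := hB.1
  have hz1B : Metric.infDist z1 Os = B := hz1B0
  have hB0 : 0 ≤ B := hz1B ▸ Metric.infDist_nonneg
  have hBpos : 0 < B := by
    rcases lt_or_eq_of_le hB0 with h | h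
    · exact h
    · exfalso
      have hz0 : Metric.infDist z1 Os = 0 := by rw [hz1B]; exact h.symm
      have hz1mem : z1 ∈ Os := (hOs_cpt.isClosed.mem_iff_infDist_zero hOs_ne).2 hz0
      have := hz1mem.2
      have := hz1L.2
      linarith
  set K : ℕ := (⌈Real.logb α (ε₀ / ε)⌉).toNat with hKdef
  have hK : ε₀ / ε ≤ α ^ K := rsg_ceil_pow hα (by positivity)
  have hK4 : (4 : ℝ) ≤ α ^ K := by
    refine le_trans ?_ hK
    rw [le_div_iff₀ hε]
    linarith
  have hKpos : (0 : ℝ) < α ^ K := by positivity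
  -- per-run hypotheses, uniform in s
  have hts' : ∀ s : ℕ, 1 ≤ s →
      α ^ 2 * B ^ 2 * G ^ 2 ≤ (εhat / 2 ^ (s - 1)) ^ 2 * (ts s) := by
    intro s hs
    have h := hts s hs
    set Q : ℝ := (2 : ℝ) ^ (s - 1) with hQ
    have hQ0 : 0 < Q := by positivity
    calc α ^ 2 * B ^ 2 * G ^ 2
        = (εhat / Q) ^ 2 * (α ^ 2 * B ^ 2 * G ^ 2 * (Q / εhat) ^ 2) := by
          field_simp
      _ ≤ (εhat / Q) ^ 2 * (ts s) := by
          apply mul_le_mul_of_nonneg_left h (by positivity)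
  have htpos : ∀ s : ℕ, 1 ≤ s → 1 ≤ ts s := by
    intro s hs
    have h0 : (0 : ℝ) < α ^ 2 * B ^ 2 * G ^ 2 * ((2 : ℝ) ^ (s - 1) / εhat) ^ 2 := by
      positivity
    have : (0 : ℝ) < (ts s : ℝ) := lt_of_lt_of_le h0 (hts s hs)
    exact_mod_cast this
  -- main induction on the number of restarts
  have main : ∀ s : ℕ, 1 ≤ s → W s ∈ Ω ∧ f (W s) - fstar ≤ 2 * εhat / 2 ^ (s - 1) := by
    intro s hs
    induction s, hs using Nat.le_induction with
    | base =>
      have hε'le : εhat / 2 ^ (1 - 1) = εhat := by norm_num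
      have hrun := rsg_run (ε' := εhat) (ε₀' := e0 1) hΩcvx hf fstar hmin hOs_ne
        hOs_cvx hOs_cpt hG hGbnd hα hB0 hdist hεhat0 le_rfl
        (by rw [he0_1]; exact hε₀) (htpos 1 le_rfl)
        (by simpa [hε'le] using hts' 1 le_rfl)
        hW0 (by rw [he0_1]; exact hWinit) (hRSG 1 le_rfl)
      refine ⟨hrun.1, ?_⟩
      have h2 : e0 1 / α ^ K ≤ ε := by
        rw [he0_1, div_le_iff₀ hKpos]
        rw [div_le_iff₀ hε] at hK
        linarith
      have := hrun.2
      simp only [pow_zero, Nat.sub_self]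
      have : f (W 1) - fstar ≤ εhat + ε := by linarith
      have hεεhat : ε ≤ εhat := hεhat1
      norm_num
      linarith
    | succ s hs ih =>
      obtain ⟨hWsΩ, hWsf⟩ := ih
      have hssub : s + 1 - 1 = s := rfl
      have hpow2 : (2 : ℝ) ^ s = 2 * 2 ^ (s - 1) := by
        have e2 : s - 1 + 1 = s := Nat.succ_pred_eq_of_pos hs
        calc (2 : ℝ) ^ s = 2 ^ (s - 1 + 1) := by rw [e2]
          _ = 2 * 2 ^ (s - 1) := by rw [pow_succ]; ring
      have h2s : (0 : ℝ) < (2 : ℝ) ^ s := by positivity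
      have he0s : e0 (s + 1) = 4 * εhat / 2 ^ s := by
        have := he0 (s + 1) (by omega)
        simpa using this
      have hε'pos : 0 < εhat / 2 ^ s := by positivity
      have hε'le : εhat / 2 ^ s ≤ εhat := by
        rw [div_le_iff₀ h2s]
        nlinarith [one_le_pow₀ (by norm_num : (1:ℝ) ≤ 2) (n := s)]
      have hinit : f (W s) - fstar ≤ e0 (s + 1) := by
        rw [he0s]
        have : 2 * εhat / 2 ^ (s - 1) = 4 * εhat / 2 ^ s := by
          rw [hpow2]
          field_simp
          ring
        linarith [this ▸ hWsf]
      have hrun := rsg_run (ε' := εhat / 2 ^ s) (ε₀' := e0 (s + 1)) hΩcvx hf fstar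
        hmin hOs_ne hOs_cvx hOs_cpt hG hGbnd hα hB0 hdist hε'pos hε'le
        (by rw [he0s]; positivity) (htpos (s + 1) (by omega))
        (by simpa using hts' (s + 1) (by omega))
        hWsΩ hinit (hRSG (s + 1) (by omega))
      refine ⟨hrun.1, ?_⟩
      have h2 : e0 (s + 1) / α ^ K ≤ εhat / 2 ^ s := by
        rw [he0s]
        calc 4 * εhat / 2 ^ s / α ^ K ≤ 4 * εhat / 2 ^ s / 4 := by
              gcongr
          _ = εhat / 2 ^ s := by ring
      have := hrun.2
      simp only [hssub]
      have hfin : f (W (s + 1)) - fstar ≤ εhat / 2 ^ s + εhat / 2 ^ s := by linarith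
      have e3 : 2 * εhat / 2 ^ s = εhat / 2 ^ s + εhat / 2 ^ s := by ring
      rw [e3]
      exact hfin
  refine ⟨fun s hs => (main s hs).2, ?_⟩
  set S : ℕ := (⌈Real.logb 2 (εhat / ε)⌉).toNat + 1 with hSdef
  have hmainS := (main S (by omega)).2
  have hS1 : S - 1 = (⌈Real.logb 2 (εhat / ε)⌉).toNat := rfl
  have hSpow : εhat / ε ≤ 2 ^ (S - 1) := by
    rw [hS1]
    exact rsg_ceil_pow (by norm_num) (by positivity)
  have h2S : (0 : ℝ) < (2 : ℝ) ^ (S - 1) := by positivity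
  have : 2 * εhat / 2 ^ (S - 1) ≤ 2 * ε := by
    rw [div_le_iff₀ h2S]
    rw [div_le_iff₀ hε] at hSpow
    nlinarith
  linarith
end
end
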